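/- arXiv:math/0211235 — 8 statements merged into one kernel-verified Lean document; each statement's English description precedes it below -/
import Mathlib

section
/- Let H be a complex Hilbert space, ι a finite index type, and T : H → (ι → ℂ) a continuous linear map. Let (Ψ_b)_{b∈β} be a Hilbert basis (complete orthonormal family) of H. Define, as values in the extended nonnegative reals [0,∞]: B := Σ_{b∈β} Σ_{J∈ι} |T(Ψ_b)(J)|², S := ⨆_{α∈H, α≠0} (Σ_{J∈ι} |T(α)(J)|²)/‖α‖², and for each J ∈ ι, S_J := ⨆_{α∈H, α≠0} |T(α)(J)|²/‖α‖². Then S ≤ B and B ≤ Σ_{J∈ι} S_J. -/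
/-!
With `f_J := (T ·) J`, Parseval applied to the Riesz representative of `f_J` gives
`∑_b |f_J(Ψ_b)|² = ‖f_J‖²`, and `S_J = ‖f_J‖²` is the squared operator norm;
hence `B = ∑_J S_J`. The remaining inequality `S ≤ ∑_J S_J` holds because a supremum
of a sum is at most the sum of the suprema.
-/

open scoped ENNReal NNReal InnerProductSpace

namespace HilbertBasis

variable {ι 𝕜 E : Type*} [RCLike 𝕜] [NormedAddCommGroup E] [InnerProductSpace 𝕜 E]

theorem tsum_enorm_inner_sq (b : HilbertBasis ι 𝕜 E) (x : E) :
    ∑' i, ‖⟪b i, x⟫_𝕜‖ₑ ^ 2 = ‖x‖ₑ ^ 2 := by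
  have h := lp.hasSum_norm (p := 2) (by norm_num) (b.repr x)
  simp only [ENNReal.toReal_ofNat, Real.rpow_two, LinearIsometryEquiv.norm_map,
    b.repr_apply_apply] at h
  rw [← ofReal_norm, ← ENNReal.ofReal_pow (norm_nonneg x), ← h.tsum_eq,
    ENNReal.ofReal_tsum_of_nonneg (fun _ => sq_nonneg _) h.summable]
  simp only [ENNReal.ofReal_pow (norm_nonneg _), ofReal_norm]

theorem tsum_enorm_apply_sq [CompleteSpace E] (b : HilbertBasis ι 𝕜 E) (f : StrongDual 𝕜 E) :
    ∑' i, ‖f (b i)‖ₑ ^ 2 = ‖f‖ₑ ^ 2 := by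
  set v := (InnerProductSpace.toDual 𝕜 E).symm f
  have hv : ∀ x, f x = ⟪v, x⟫_𝕜 := fun x => InnerProductSpace.toDual_symm_apply.symm
  have hfv : ‖f‖ₑ = ‖v‖ₑ := by simp [v, enorm_eq_nnnorm]
  rw [hfv, ← b.tsum_enorm_inner_sq v]
  congr! 2 with i
  rw [hv, ← ofReal_norm, ← ofReal_norm, norm_inner_symm]

end HilbertBasis

namespace ContinuousLinearMap

variable {𝕜 𝕜₂ E F : Type*} [NontriviallyNormedField 𝕜] [NontriviallyNormedField 𝕜₂]
  [NormedAddCommGroup E] [SeminormedAddCommGroup F] [NormedSpace 𝕜 E] [NormedSpace 𝕜₂ F]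
  {σ₁₂ : 𝕜 →+* 𝕜₂} [RingHomIsometric σ₁₂]

theorem iSup_enorm_apply_div_enorm (f : E →SL[σ₁₂] F) :
    ⨆ (x : E) (_ : x ≠ 0), ‖f x‖ₑ / ‖x‖ₑ = ‖f‖ₑ := by
  refine le_antisymm (iSup₂_le fun x _ => ENNReal.div_le_of_le_mul (f.le_opENorm x)) ?_
  refine f.opENorm_le_bound fun x => ?_
  rcases eq_or_ne x 0 with rfl | hx
  · simp [← ofReal_norm]
  · have hx' : ‖x‖ₑ ≠ 0 := enorm_ne_zero.2 hx
    rw [← ENNReal.div_le_iff hx' enorm_ne_top]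
    exact le_iSup₂ (f := fun (y : E) (_ : y ≠ 0) => ‖f y‖ₑ / ‖y‖ₑ) x hx

theorem iSup_enorm_apply_sq_div_enorm_sq (f : E →SL[σ₁₂] F) :
    ⨆ (x : E) (_ : x ≠ 0), ‖f x‖ₑ ^ 2 / ‖x‖ₑ ^ 2 = ‖f‖ₑ ^ 2 := by
  have hsq : Monotone (fun t : ℝ≥0∞ => t ^ 2) := pow_left_mono 2
  have hcont : Continuous (fun t : ℝ≥0∞ => t ^ 2) := ENNReal.continuous_pow 2
  rw [← f.iSup_enorm_apply_div_enorm, hsq.map_iSup_of_continuousAt hcont.continuousAt (by simp)]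
  refine iSup_congr fun x => ?_
  rw [hsq.map_iSup_of_continuousAt hcont.continuousAt (by simp)]
  simp only [div_eq_mul_inv, mul_pow, ENNReal.inv_pow]

end ContinuousLinearMap

/-- Abstract comparison lemma between the Bergman kernel function
`B = ∑_b ∑_J |T(Ψ_b)(J)|²` and the extremal functions
`S = ⨆_{α≠0} (∑_J |T(α)(J)|²)/‖α‖²`, `S_J = ⨆_{α≠0} |T(α)(J)|²/‖α‖²`,
all computed in `[0,∞]`. -/
theorem bergman_extremal_comparison
    {H : Type*} [NormedAddCommGroup H] [InnerProductSpace ℂ H] [CompleteSpace H]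
    {ι : Type*} [Fintype ι] {β : Type*}
    (Ψ : HilbertBasis β ℂ H) (T : H →L[ℂ] (ι → ℂ))
    (B S : ℝ≥0∞) (SJ : ι → ℝ≥0∞)
    (hB : B = ∑' b : β, ∑ J : ι, (‖T (Ψ b) J‖₊ : ℝ≥0∞) ^ 2)
    (hS : S = ⨆ (α : H) (_ : α ≠ 0),
        (∑ J : ι, (‖T α J‖₊ : ℝ≥0∞) ^ 2) / (‖α‖₊ : ℝ≥0∞) ^ 2)
    (hSJ : ∀ J : ι, SJ J = ⨆ (α : H) (_ : α ≠ 0),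
        (‖T α J‖₊ : ℝ≥0∞) ^ 2 / (‖α‖₊ : ℝ≥0∞) ^ 2) :
    S ≤ B ∧ B ≤ ∑ J : ι, SJ J := by
  let f : ι → StrongDual ℂ H := fun J => ContinuousLinearMap.proj J ∘L T
  have hSJ_eq (J : ι) : SJ J = ‖f J‖ₑ ^ 2 :=
    (hSJ J).trans (f J).iSup_enorm_apply_sq_div_enorm_sq
  have hB_eq : B = ∑ J, SJ J := by
    rw [hB, Summable.tsum_finsetSum fun _ _ => ENNReal.summable]
    exact Finset.sum_congr rfl fun J _ => (Ψ.tsum_enorm_apply_sq (f J)).trans (hSJ_eq J).symm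
  refine ⟨?_, hB_eq.le⟩
  rw [hS, hB_eq]
  refine iSup₂_le fun α hα => ?_
  calc (∑ J, (‖T α J‖₊ : ℝ≥0∞) ^ 2) / (‖α‖₊ : ℝ≥0∞) ^ 2
      = ∑ J, (‖T α J‖₊ : ℝ≥0∞) ^ 2 / (‖α‖₊ : ℝ≥0∞) ^ 2 := by
        simp only [div_eq_mul_inv, Finset.sum_mul]
    _ ≤ ∑ J, SJ J := by
        gcongr with J
        rw [hSJ J]
        exact le_iSup₂ (f := fun (α : H) (_ : α ≠ 0) =>
          (‖T α J‖₊ : ℝ≥0∞) ^ 2 / (‖α‖₊ : ℝ≥0∞) ^ 2) α hα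
end

section
/- Let n be a natural number and λ : Fin n → ℝ with λ_j > 0 for all j. Then for every entire function f : ℂⁿ → ℂ (i.e., f is differentiable over ℂ at every point), π^n · |f(0)|² ≤ (∏_j λ_j) · ∫_{ℂⁿ} |f(z)|² e^{−φ₀(z)} dz, where the integral is taken in the extended nonnegative reals [0,∞]. -/
/-!
By the mean-value property `g 0 ^ 2` is the circle average of `g ^ 2`, so
`2π |g 0|² ≤ ∫ |g|²` over every circle centred at `0`. Integrating in polar coordinates against a
radial weight `w` gives `|g 0|² ∫ w ≤ ∫ |g|² w`; for `w = e^{-λ|z|²}`, whose integral over `ℂ` is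
`π / λ`, this is the case `n = 1`. In general, Fubini splits off the first coordinate: the
one-variable estimate in that coordinate and the induction hypothesis in the remaining ones
combine to the claim.
-/

open scoped ENNReal

open MeasureTheory Real Set

theorem Complex.polarCoord_symm_eq_circleMap (p : ℝ × ℝ) :
    Complex.polarCoord.symm p = circleMap 0 p.1 p.2 := by
  simp [circleMap, Complex.exp_mul_I]

theorem Complex.lintegral_ofReal_exp_neg_mul_sq_norm {b : ℝ} (hb : 0 < b) :
    ∫⁻ z : ℂ, ENNReal.ofReal (Real.exp (-(b * ‖z‖ ^ 2))) = ENNReal.ofReal (π / b) := by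
  have hgauss : ∫ z : ℂ, Real.exp (-(b * ‖z‖ ^ 2)) = π / b := by
    simpa [Complex.finrank_real_complex] using GaussianFourier.integral_rexp_neg_mul_sq_norm
      (V := ℂ) hb
  rw [← ofReal_integral_eq_lintegral_ofReal
    (.of_integral_ne_zero (hgauss ▸ (div_pos pi_pos hb).ne')) (.of_forall fun _ ↦ by positivity),
    hgauss]

theorem lintegral_fin_cons {α : Type*} [MeasureSpace α] [SigmaFinite (volume : Measure α)] {n : ℕ}
    {F : (Fin (n + 1) → α) → ℝ≥0∞} (hF : Measurable F) :
    ∫⁻ z, F z = ∫⁻ y : Fin n → α, ∫⁻ x : α, F (Fin.cons x y) := by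
  let e := (MeasurableEquiv.piFinSuccAbove (fun _ : Fin (n + 1) ↦ α) 0).symm
  rw [← (volume_preserving_piFinSuccAbove _ 0).symm.lintegral_comp_emb e.measurableEmbedding,
    Measure.volume_eq_prod, lintegral_prod_symm' (fun p ↦ F (e p)) (hF.comp e.measurable)]
  simp [e, MeasurableEquiv.piFinSuccAbove_symm_apply, Fin.consEquiv]

theorem ofReal_two_pi_mul_sq_enorm_le_lintegral_circleMap {g : ℂ → ℂ} (hg : Differentiable ℂ g)
    (c : ℂ) (r : ℝ) :
    ENNReal.ofReal (2 * π) * ‖g c‖ₑ ^ 2 ≤ ∫⁻ θ in Ioo (-π) π, ‖g (circleMap c r θ)‖ₑ ^ 2 := by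
  have hmean : circleAverage (fun z ↦ g z ^ 2) c r = g c ^ 2 :=
    (hg.pow 2).diffContOnCl.circleAverage
  rw [circleAverage_eq_integral_add (-π), intervalIntegral.integral_comp_add_right
    (fun θ ↦ g (circleMap c r θ) ^ 2), zero_add, show 2 * π + -π = π by ring,
    intervalIntegral.integral_of_le (by linarith [pi_pos]), inv_smul_eq_iff₀ (by positivity)]
    at hmean
  calc ENNReal.ofReal (2 * π) * ‖g c‖ₑ ^ 2
      = ‖∫ θ in Ioc (-π) π, g (circleMap c r θ) ^ 2‖ₑ := by
        rw [hmean, enorm_smul, enorm_pow, Real.enorm_of_nonneg (by positivity)]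
    _ ≤ ∫⁻ θ in Ioo (-π) π, ‖g (circleMap c r θ)‖ₑ ^ 2 := by
        rw [restrict_Ioo_eq_restrict_Ioc]
        simp_rw [← enorm_pow]
        exact enorm_integral_le_lintegral_enorm _

theorem sq_enorm_mul_lintegral_radial_le {g : ℂ → ℂ} (hg : Differentiable ℂ g) {w : ℝ → ℝ≥0∞}
    (hw : Measurable w) :
    ‖g 0‖ₑ ^ 2 * ∫⁻ z : ℂ, w ‖z‖ ≤ ∫⁻ z, ‖g z‖ₑ ^ 2 * w ‖z‖ := by
  rw [← lintegral_const_mul _ (by fun_prop), ← Complex.lintegral_comp_polarCoord_symm,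
    ← Complex.lintegral_comp_polarCoord_symm]
  simp only [Complex.polarCoord_symm_eq_circleMap, norm_circleMap_zero, smul_eq_mul]
  have hg_meas : Measurable g := hg.continuous.measurable
  have hcircle : Measurable fun p : ℝ × ℝ ↦ circleMap 0 p.1 p.2 := by
    unfold circleMap; fun_prop
  rw [polarCoord_target, Measure.volume_eq_prod,
    setLIntegral_prod _ (by fun_prop), setLIntegral_prod _ (by fun_prop)]
  refine lintegral_mono fun r ↦ ?_
  calc ∫⁻ θ in Ioo (-π) π, ENNReal.ofReal r * (‖g 0‖ₑ ^ 2 * w |r|)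
      = ENNReal.ofReal r * w |r| * (ENNReal.ofReal (2 * π) * ‖g 0‖ₑ ^ 2) := by
        rw [setLIntegral_const, Real.volume_Ioo]; ring_nf
    _ ≤ ENNReal.ofReal r * w |r| * ∫⁻ θ in Ioo (-π) π, ‖g (circleMap 0 r θ)‖ₑ ^ 2 := by
        gcongr
        exact ofReal_two_pi_mul_sq_enorm_le_lintegral_circleMap hg 0 r
    _ = ∫⁻ θ in Ioo (-π) π, ENNReal.ofReal r * (‖g (circleMap 0 r θ)‖ₑ ^ 2 * w |r|) := by
        rw [← lintegral_const_mul _ (by fun_prop)]; ring_nf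

theorem ofReal_pi_mul_sq_enorm_le_lintegral_gaussian {g : ℂ → ℂ} (hg : Differentiable ℂ g) {b : ℝ}
    (hb : 0 < b) :
    ENNReal.ofReal π * ‖g 0‖ₑ ^ 2 ≤
      ENNReal.ofReal b * ∫⁻ z, ‖g z‖ₑ ^ 2 * ENNReal.ofReal (Real.exp (-(b * ‖z‖ ^ 2))) := by
  have hradial := sq_enorm_mul_lintegral_radial_le hg
    (w := fun r ↦ ENNReal.ofReal (Real.exp (-(b * r ^ 2)))) (by fun_prop)
  rw [Complex.lintegral_ofReal_exp_neg_mul_sq_norm hb] at hradial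
  calc ENNReal.ofReal π * ‖g 0‖ₑ ^ 2
      = ENNReal.ofReal b * (‖g 0‖ₑ ^ 2 * ENNReal.ofReal (π / b)) := by
        rw [mul_left_comm, ← ENNReal.ofReal_mul hb.le, mul_div_cancel₀ _ hb.ne', mul_comm]
    _ ≤ _ := mul_le_mul_right hradial _

noncomputable def fockWeight {ι : Type*} [Fintype ι] (lam : ι → ℝ) (z : ι → ℂ) : ℝ≥0∞ :=
  ENNReal.ofReal (Real.exp (-(∑ j, lam j * ‖z j‖ ^ 2)))

theorem fockWeight_ne_top {ι : Type*} [Fintype ι] (lam : ι → ℝ) (z : ι → ℂ) :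
    fockWeight lam z ≠ ⊤ :=
  ENNReal.ofReal_ne_top

@[fun_prop]
theorem measurable_fockWeight {ι : Type*} [Fintype ι] (lam : ι → ℝ) :
    Measurable (fockWeight lam) := by
  unfold fockWeight; fun_prop

theorem fockWeight_cons {n : ℕ} (lam : Fin (n + 1) → ℝ) (x : ℂ) (y : Fin n → ℂ) :
    fockWeight lam (Fin.cons x y) =
      ENNReal.ofReal (Real.exp (-(lam 0 * ‖x‖ ^ 2))) * fockWeight (Fin.tail lam) y := by
  rw [fockWeight, Fin.sum_univ_succ, neg_add, Real.exp_add, ENNReal.ofReal_mul (by positivity)]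
  simp only [Fin.cons_zero, Fin.cons_succ, fockWeight, Fin.tail]

theorem ofReal_pi_pow_mul_sq_enorm_le_prod_mul_lintegral_fockWeight {n : ℕ} (lam : Fin n → ℝ)
    (hlam : ∀ j, 0 < lam j) {f : (Fin n → ℂ) → ℂ} (hf : Differentiable ℂ f) :
    ENNReal.ofReal π ^ n * ‖f 0‖ₑ ^ 2 ≤
      (∏ j, ENNReal.ofReal (lam j)) * ∫⁻ z, ‖f z‖ₑ ^ 2 * fockWeight lam z := by
  induction n with
  | zero =>
    rw [lintegral_unique]
    simp [volume_pi, fockWeight, Unique.default_eq (0 : Fin 0 → ℂ)]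
  | succ n ih =>
    have hf_meas : Measurable f := hf.continuous.measurable
    calc ENNReal.ofReal π ^ (n + 1) * ‖f 0‖ₑ ^ 2
        = ENNReal.ofReal π * (ENNReal.ofReal π ^ n * ‖f (Fin.cons 0 0)‖ₑ ^ 2) := by
          rw [show (Fin.cons 0 0 : Fin (n + 1) → ℂ) = 0 from Matrix.cons_zero_zero, pow_succ',
            mul_assoc]
      _ ≤ ENNReal.ofReal π * ((∏ j, ENNReal.ofReal (Fin.tail lam j)) *
            ∫⁻ y, ‖f (Fin.cons 0 y)‖ₑ ^ 2 * fockWeight (Fin.tail lam) y) := by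
          gcongr ENNReal.ofReal π * ?_
          exact ih _ (fun j ↦ hlam j.succ) (f := fun y ↦ f (Fin.cons 0 y)) (by fun_prop)
      _ = (∏ j, ENNReal.ofReal (Fin.tail lam j)) *
            ∫⁻ y, ENNReal.ofReal π * ‖f (Fin.cons 0 y)‖ₑ ^ 2 * fockWeight (Fin.tail lam) y := by
          rw [mul_left_comm, ← lintegral_const_mul' _ _ ENNReal.ofReal_ne_top]
          simp only [mul_assoc]
      _ ≤ (∏ j, ENNReal.ofReal (Fin.tail lam j)) * ∫⁻ y, (ENNReal.ofReal (lam 0) *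
            ∫⁻ x, ‖f (Fin.cons x y)‖ₑ ^ 2 * ENNReal.ofReal (Real.exp (-(lam 0 * ‖x‖ ^ 2)))) *
            fockWeight (Fin.tail lam) y := by
          gcongr _ * ∫⁻ y, ?_ * _ with y
          exact ofReal_pi_mul_sq_enorm_le_lintegral_gaussian (g := fun x ↦ f (Fin.cons x y))
            (by fun_prop) (hlam 0)
      _ = (∏ j, ENNReal.ofReal (lam j)) * ∫⁻ z, ‖f z‖ₑ ^ 2 * fockWeight lam z := by
          rw [Fin.prod_univ_succ, lintegral_fin_cons (by fun_prop)]
          simp_rw [fockWeight_cons, ← mul_assoc,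
            lintegral_mul_const' _ _ (fockWeight_ne_top _ _), mul_assoc (ENNReal.ofReal (lam 0)),
            lintegral_const_mul' _ _ ENNReal.ofReal_ne_top, Fin.tail]
          ring

/-- Reproducing estimate at the origin for the Fock space with weight
`φ₀(z) = ∑ j, λ j * |z j|²`, `λ j > 0`:
`π^n |f(0)|² ≤ (∏ j, λ j) · ∫_{ℂⁿ} |f|² e^{−φ₀}` for entire `f`. -/
theorem fock_reproducing_estimate (n : ℕ) (lam : Fin n → ℝ) (hlam : ∀ j, 0 < lam j)
    (f : (Fin n → ℂ) → ℂ) (hf : Differentiable ℂ f) :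
    ENNReal.ofReal Real.pi ^ n * (‖f 0‖₊ : ℝ≥0∞) ^ 2 ≤
      (∏ j : Fin n, ENNReal.ofReal (lam j)) *
        ∫⁻ z : Fin n → ℂ,
          (‖f z‖₊ : ℝ≥0∞) ^ 2 *
            ENNReal.ofReal (Real.exp (-(∑ j : Fin n, lam j * ‖z j‖ ^ 2))) := by
  simpa only [enorm_eq_nnnorm, fockWeight] using
    ofReal_pi_pow_mul_sq_enorm_le_prod_mul_lintegral_fockWeight lam hlam hf
end

section
/- Let n be a natural number and λ : Fin n → ℝ with λ_j > 0 for all j. Then the supremum, over all entire functions f : ℂⁿ → ℂ, of |f(0)|² / ‖f‖²_{φ₀} (computed in the extended nonnegative reals [0,∞], with the conventions x/∞ = 0 and 0/0 = 0) equals (∏_j λ_j)/π^n, and this supremum is attained by the constant function f ≡ 1. -/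
/-!
By the mean value property and Jensen's inequality, `‖f 0‖²` is at most the average of
`‖f (e^{iθ} z)‖²` over `θ ∈ [0, 2π]`, for every `z`. Integrate this against a weight and a measure
that are both invariant under `z ↦ e^{iθ} z`, swap the two integrals and undo the rotation:
`‖f 0‖² ∫ e^{-φ₀} ≤ ‖f‖²_{φ₀}`, with equality for `f ≡ 1`. The extremal value is therefore the
inverse of the Gaussian mass `∫ e^{-φ₀} = ∏ j, π / λ_j`.
-/

open scoped ENNReal

open MeasureTheory Set Real

section CircleInvariant

variable {E F : Type*} [NormedAddCommGroup E] [NormedSpace ℂ E]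
  [NormedAddCommGroup F] [NormedSpace ℂ F] [CompleteSpace F]

theorem Differentiable.enorm_sq_le_setLAverage_circleMap {g : ℂ → F} (hg : Differentiable ℂ g)
    (c : ℂ) (R : ℝ) :
    ‖g c‖ₑ ^ 2 ≤ ⨍⁻ θ in Ioc 0 (2 * π), ‖g (circleMap c R θ)‖ₑ ^ 2 ∂volume := by
  have hvol₀ : volume (Ioc 0 (2 * π)) ≠ 0 := by simp [pi_pos]
  have hvol : volume (Ioc 0 (2 * π)) ≠ ∞ := measure_Ioc_lt_top.ne
  have hcont : Continuous fun θ => g (circleMap c R θ) :=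
    hg.continuous.comp (continuous_circleMap c R)
  have hmean : ⨍ θ in Ioc 0 (2 * π), g (circleMap c R θ) = g c := by
    rw [← uIoc_of_le two_pi_pos.le, ← circleAverage_eq_intervalAverage,
      hg.diffContOnCl.circleAverage]
  have hconvex : ConvexOn ℝ univ fun x : F => ‖x‖ ^ 2 :=
    convexOn_univ_norm.pow (fun _ _ => norm_nonneg _) 2
  have hjensen := hconvex.map_set_average_le (continuous_norm.pow 2).continuousOn isClosed_univ
    hvol₀ hvol (by simp) hcont.integrableOn_Ioc (hcont.norm.pow 2).integrableOn_Ioc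
  rw [hmean] at hjensen
  have := ENNReal.ofReal_le_ofReal hjensen
  rw [ofReal_setAverage (f := fun θ => ‖g (circleMap c R θ)‖ ^ 2)
    (hcont.norm.pow 2).integrableOn_Ioc (.of_forall fun _ => by positivity),
    ← setLAverage_eq] at this
  simpa only [ENNReal.ofReal_pow (norm_nonneg _), ofReal_norm] using this

theorem Differentiable.enorm_sq_le_setLAverage_circle_smul {f : E → F} (hf : Differentiable ℂ f)
    (z : E) : ‖f 0‖ₑ ^ 2 ≤ ⨍⁻ θ in Ioc 0 (2 * π), ‖f (Circle.exp θ • z)‖ₑ ^ 2 ∂volume := by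
  simpa [circleMap_zero, Circle.smul_def] using
    (hf.comp (differentiable_id.smul_const z)).enorm_sq_le_setLAverage_circleMap 0 1

variable [MeasurableSpace E] [BorelSpace E] {μ : Measure E} [SFinite μ]

theorem Differentiable.enorm_sq_mul_lintegral_le_lintegral_enorm_sq_mul {f : E → F}
    (hf : Differentiable ℂ f) (hμ : ∀ u : Circle, MeasurePreserving (u • ·) μ μ)
    {W : E → ℝ≥0∞} (hWm : Measurable W) (hW : ∀ (u : Circle) z, W (u • z) = W z) :
    ‖f 0‖ₑ ^ 2 * ∫⁻ z, W z ∂μ ≤ ∫⁻ z, ‖f z‖ₑ ^ 2 * W z ∂μ := by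
  have hvol₀ : volume (Ioc 0 (2 * π)) ≠ 0 := by simp [pi_pos]
  have hvol : volume (Ioc 0 (2 * π)) ≠ ∞ := measure_Ioc_lt_top.ne
  have hfc := hf.continuous
  have hrot : Measurable fun p : E × ℝ => ‖f (Circle.exp p.2 • p.1)‖ₑ ^ 2 :=
    Continuous.measurable (by fun_prop)
  have hmeas : Measurable fun z => ‖f z‖ₑ ^ 2 * W z :=
    (Continuous.measurable (by fun_prop)).mul hWm
  calc ‖f 0‖ₑ ^ 2 * ∫⁻ z, W z ∂μ = ∫⁻ z, ‖f 0‖ₑ ^ 2 * W z ∂μ :=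
        (lintegral_const_mul _ hWm).symm
    _ ≤ ∫⁻ z, (⨍⁻ θ in Ioc 0 (2 * π), ‖f (Circle.exp θ • z)‖ₑ ^ 2 ∂volume) * W z ∂μ :=
        lintegral_mono fun z => mul_le_mul_left (hf.enorm_sq_le_setLAverage_circle_smul z) _
    _ = ⨍⁻ θ in Ioc 0 (2 * π), (∫⁻ z, ‖f (Circle.exp θ • z)‖ₑ ^ 2 * W z ∂μ) ∂volume := by
        simp_rw [setLAverage_eq']
        rw [← lintegral_lintegral_swap (hrot.mul (hWm.comp measurable_fst)).aemeasurable]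
        exact lintegral_congr fun z =>
          (lintegral_mul_const _ (hrot.comp measurable_prodMk_left)).symm
    _ = ⨍⁻ θ in Ioc 0 (2 * π), (∫⁻ z, ‖f z‖ₑ ^ 2 * W z ∂μ) ∂volume := by
        congr 1; funext θ
        simpa only [hW] using (hμ (Circle.exp θ)).lintegral_comp hmeas
    _ = ∫⁻ z, ‖f z‖ₑ ^ 2 * W z ∂μ := setLAverage_const hvol₀ hvol _

theorem iSup_enorm_sq_div_lintegral_enorm_sq_mul_eq_inv_lintegral
    (hμ : ∀ u : Circle, MeasurePreserving (u • ·) μ μ) {W : E → ℝ≥0∞} (hWm : Measurable W)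
    (hW : ∀ (u : Circle) z, W (u • z) = W z) :
    ⨆ (f : E → ℂ) (_ : Differentiable ℂ f), ‖f 0‖ₑ ^ 2 / ∫⁻ z, ‖f z‖ₑ ^ 2 * W z ∂μ =
      (∫⁻ z, W z ∂μ)⁻¹ := by
  refine le_antisymm (iSup₂_le fun f hf => ?_) ?_
  · rw [ENNReal.le_inv_iff_mul_le, div_eq_mul_inv, mul_right_comm, ← div_eq_mul_inv]
    exact (ENNReal.div_le_div_right
      (hf.enorm_sq_mul_lintegral_le_lintegral_enorm_sq_mul hμ hWm hW) _).trans
      ENNReal.div_self_le_one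
  · refine le_iSup₂_of_le (fun _ => (1 : ℂ)) (differentiable_const 1) ?_
    simp

end CircleInvariant

section Gaussian

variable {ι : Type*} [Fintype ι]

theorem Complex.integral_exp_neg_mul_sq_norm {b : ℝ} (hb : 0 < b) :
    ∫ w : ℂ, rexp (-b * ‖w‖ ^ 2) = π / b := by
  simpa using GaussianFourier.integral_rexp_neg_mul_sq_norm (V := ℂ) hb

theorem lintegral_exp_neg_sum_mul_sq_norm {b : ι → ℝ} (hb : ∀ i, 0 < b i) :
    ∫⁻ z : ι → ℂ, ENNReal.ofReal (rexp (-∑ i, b i * ‖z i‖ ^ 2)) =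
      ∏ i, ENNReal.ofReal (π / b i) := by
  have hprod : ∀ z : ι → ℂ, rexp (-∑ i, b i * ‖z i‖ ^ 2) = ∏ i, rexp (-b i * ‖z i‖ ^ 2) := by
    simp [← Real.exp_sum, Finset.sum_neg_distrib]
  have hint : ∫ z : ι → ℂ, ∏ i, rexp (-b i * ‖z i‖ ^ 2) = ∏ i, π / b i := by
    rw [integral_fintype_prod_volume_eq_prod (fun i (w : ℂ) => rexp (-b i * ‖w‖ ^ 2))]
    exact Finset.prod_congr rfl fun i _ => Complex.integral_exp_neg_mul_sq_norm (hb i)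
  have hpos : 0 < ∏ i, π / b i := Finset.prod_pos fun i _ => div_pos pi_pos (hb i)
  simp_rw [hprod]
  rw [← ofReal_integral_eq_lintegral_ofReal (.of_integral_ne_zero (hint ▸ hpos.ne'))
      (.of_forall fun _ => by positivity), hint,
    ENNReal.ofReal_prod_of_nonneg fun i _ => (div_pos pi_pos (hb i)).le]

theorem inv_prod_ofReal_pi_div {b : ι → ℝ} (hb : ∀ i, 0 < b i) :
    (∏ i, ENNReal.ofReal (π / b i))⁻¹ =
      (∏ i, ENNReal.ofReal (b i)) / ENNReal.ofReal π ^ Fintype.card ι := by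
  rw [← ENNReal.ofReal_prod_of_nonneg fun i _ => (div_pos pi_pos (hb i)).le,
    ← ENNReal.ofReal_inv_of_pos (Finset.prod_pos fun i _ => div_pos pi_pos (hb i)),
    Finset.prod_div_distrib, Finset.prod_const, Finset.card_univ, inv_div,
    ENNReal.ofReal_div_of_pos (by positivity),
    ENNReal.ofReal_prod_of_nonneg fun i _ => (hb i).le, ENNReal.ofReal_pow pi_pos.le]

theorem measurePreserving_circle_smul_pi (u : Circle) :
    MeasurePreserving (u • · : (ι → ℂ) → ι → ℂ) :=
  volume_preserving_pi fun _ => by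
    simpa [rotation_apply, Circle.smul_def] using (rotation u).measurePreserving

end Gaussian

/-- The model extremal function of the Fock space at the origin:
the supremum over entire `f` of `|f(0)|²/‖f‖²_{φ₀}` (in `[0,∞]`) equals
`(∏ j, λ j)/π^n`, and it is attained by the constant function `1`. -/
theorem fock_extremal_value (n : ℕ) (lam : Fin n → ℝ) (hlam : ∀ j, 0 < lam j) :
    (⨆ (f : (Fin n → ℂ) → ℂ) (_ : Differentiable ℂ f),
        (‖f 0‖₊ : ℝ≥0∞) ^ 2 /
          ∫⁻ z : Fin n → ℂ,
            (‖f z‖₊ : ℝ≥0∞) ^ 2 *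
              ENNReal.ofReal (Real.exp (-(∑ j : Fin n, lam j * ‖z j‖ ^ 2))))
      = (∏ j : Fin n, ENNReal.ofReal (lam j)) / ENNReal.ofReal Real.pi ^ n ∧
    (‖(fun _ : Fin n → ℂ => (1 : ℂ)) 0‖₊ : ℝ≥0∞) ^ 2 /
        (∫⁻ z : Fin n → ℂ,
          (‖(fun _ : Fin n → ℂ => (1 : ℂ)) z‖₊ : ℝ≥0∞) ^ 2 *
            ENNReal.ofReal (Real.exp (-(∑ j : Fin n, lam j * ‖z j‖ ^ 2))))
      = (∏ j : Fin n, ENNReal.ofReal (lam j)) / ENNReal.ofReal Real.pi ^ n := by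
  have hmass : (∫⁻ z : Fin n → ℂ, ENNReal.ofReal (rexp (-∑ j, lam j * ‖z j‖ ^ 2)))⁻¹ =
      (∏ j, ENNReal.ofReal (lam j)) / ENNReal.ofReal π ^ n := by
    rw [lintegral_exp_neg_sum_mul_sq_norm hlam, inv_prod_ofReal_pi_div hlam, Fintype.card_fin]
  have hweight (u : Circle) (z : Fin n → ℂ) :
      ENNReal.ofReal (rexp (-∑ j, lam j * ‖(u • z) j‖ ^ 2)) =
        ENNReal.ofReal (rexp (-∑ j, lam j * ‖z j‖ ^ 2)) := by
    simp only [Circle.smul_def, Pi.smul_apply, norm_smul, Circle.norm_coe, one_mul]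
  refine ⟨hmass ▸ iSup_enorm_sq_div_lintegral_enorm_sq_mul_eq_inv_lintegral
    measurePreserving_circle_smul_pi (by fun_prop) hweight, ?_⟩
  simpa using hmass
end

section
/- Let n be a natural number, λ : Fin n → ℝ arbitrary, and R > 0. Let f : ℂⁿ → ℂ be holomorphic on an open set containing the closed polydisc {z : |z_j| ≤ R for all j}. Then |f(0)|² · ∫_{Δ_R} e^{−φ₀(z)} dz ≤ ∫_{Δ_R} |f(z)|² e^{−φ₀(z)} dz, where Δ_R = {z ∈ ℂⁿ : |z_j| < R for all j} and the integrals are with respect to Lebesgue measure on ℂⁿ ≅ ℝ^{2n}. -/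
open scoped ENNReal Real
open MeasureTheory Metric Set

/-!
For `z` in the polydisc, `u ↦ f (u • z)` is holomorphic on the closed unit disc; the mean value
property of its square and the triangle inequality give
`2π |f 0|² ≤ ∫₀^{2π} |f (e^{iθ} z)|² dθ`. Integrate this in `z` against `e^{-φ₀}` over the
polydisc and exchange the integrals: the diagonal rotation `z ↦ e^{iθ} z` preserves Lebesgue
measure, the polydisc and the weight, so the right side becomes `2π ∫ |f|² e^{-φ₀}`.
-/

theorem enorm_sq_mul_two_pi_le_lintegral_circleMap {g : ℂ → ℂ} {c : ℂ} {R : ℝ}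
    (hg : DifferentiableOn ℂ g (closedBall c |R|)) :
    ‖g c‖ₑ ^ 2 * ENNReal.ofReal (2 * π) ≤
      ∫⁻ θ in Ioc 0 (2 * π), ‖g (circleMap c R θ)‖ₑ ^ 2 := by
  have hmean : Real.circleAverage (g ^ 2) c R = g c ^ 2 :=
    ((hg.pow 2).diffContOnCl_ball subset_rfl).circleAverage
  have hint : ∫ θ in Ioc 0 (2 * π), g (circleMap c R θ) ^ 2 = (2 * π) • g c ^ 2 := by
    rwa [Real.circleAverage_def, intervalIntegral.integral_of_le Real.two_pi_pos.le,
      inv_smul_eq_iff₀ Real.two_pi_pos.ne'] at hmean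
  calc ‖g c‖ₑ ^ 2 * ENNReal.ofReal (2 * π)
      = ‖∫ θ in Ioc 0 (2 * π), g (circleMap c R θ) ^ 2‖ₑ := by
        rw [hint, enorm_smul, enorm_pow, Real.enorm_of_nonneg Real.two_pi_pos.le, mul_comm]
    _ ≤ ∫⁻ θ in Ioc 0 (2 * π), ‖g (circleMap c R θ) ^ 2‖ₑ := enorm_integral_le_lintegral_enorm _
    _ = ∫⁻ θ in Ioc 0 (2 * π), ‖g (circleMap c R θ)‖ₑ ^ 2 := by simp_rw [enorm_pow]

theorem volume_preserving_pi_smul_of_norm_eq_one {ι : Type*} [Fintype ι] {u : ℂ} (hu : ‖u‖ = 1) :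
    MeasurePreserving (fun z : ι → ℂ => u • z) := by
  have hrot : MeasurePreserving (u * ·) :=
    (rotation (⟨u, mem_sphere_zero_iff_norm.2 hu⟩ : Circle)).measurePreserving
  exact volume_preserving_pi fun _ => hrot

theorem MeasureTheory.MeasurePreserving.withDensity {α : Type*} [MeasurableSpace α]
    {μ : Measure α} {f : α → α} (hf : MeasurePreserving f μ μ) {w : α → ℝ≥0∞}
    (hw : Measurable w) (hwf : ∀ x, w (f x) = w x) :
    MeasurePreserving f (μ.withDensity w) (μ.withDensity w) := by
  refine ⟨hf.measurable, Measure.ext fun s hs => ?_⟩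
  rw [Measure.map_apply hf.measurable hs, withDensity_apply _ (hf.measurable hs),
    withDensity_apply _ hs, ← hf.setLIntegral_comp_preimage hs hw]
  simp_rw [hwf]

theorem measurePreserving_circleMap_smul_withDensity {ι : Type*} [Fintype ι]
    {S : Set (ι → ℂ)} (hS : MeasurableSet S) {w : (ι → ℂ) → ℝ≥0∞} (hw : Measurable w) {θ : ℝ}
    (hSinv : (circleMap 0 1 θ • ·) ⁻¹' S = S) (hwinv : ∀ z, w (circleMap 0 1 θ • z) = w z) :
    MeasurePreserving (circleMap 0 1 θ • ·) ((volume.restrict S).withDensity w)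
      ((volume.restrict S).withDensity w) := by
  have hrot := (volume_preserving_pi_smul_of_norm_eq_one (ι := ι)
    (norm_circleMap_zero 1 θ ▸ abs_one)).restrict_preimage hS
  rw [hSinv] at hrot
  exact hrot.withDensity hw hwinv

section
variable {E : Type*} [NormedAddCommGroup E] [NormedSpace ℂ E]

theorem DifferentiableOn.enorm_sq_mul_two_pi_le_lintegral_circleMap_smul {f : E → ℂ} {U : Set E}
    (hf : DifferentiableOn ℂ f U) {z : E} (hz : ∀ u : ℂ, ‖u‖ ≤ 1 → u • z ∈ U) :
    ‖f 0‖ₑ ^ 2 * ENNReal.ofReal (2 * π) ≤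
      ∫⁻ θ in Ioc 0 (2 * π), ‖f (circleMap 0 1 θ • z)‖ₑ ^ 2 := by
  have hline : DifferentiableOn ℂ (fun u : ℂ => f (u • z)) (closedBall 0 |1|) :=
    hf.comp (differentiableOn_id.smul_const z) fun u hu => hz u (by simpa using hu)
  simpa using enorm_sq_mul_two_pi_le_lintegral_circleMap hline

variable [MeasurableSpace E] [BorelSpace E] {μ : Measure E}

theorem quasiMeasurePreserving_circleMap_smul [SFinite μ] (ν : Measure ℝ) [SFinite ν]
    (hμ : ∀ θ : ℝ, MeasurePreserving (circleMap 0 1 θ • ·) μ μ) :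
    Measure.QuasiMeasurePreserving (fun p : E × ℝ => circleMap 0 1 p.2 • p.1) (μ.prod ν) μ := by
  have hmeas : Measurable (fun p : E × ℝ => circleMap 0 1 p.2 • p.1) := by fun_prop
  refine ⟨hmeas, Measure.AbsolutelyContinuous.mk fun s hs hμs => ?_⟩
  rw [Measure.map_apply hmeas hs, Measure.prod_apply_symm (hmeas hs)]
  refine (lintegral_congr fun θ => ?_).trans lintegral_zero
  exact ((hμ θ).measure_preimage hs.nullMeasurableSet).trans hμs

theorem lintegral_lintegral_circleMap_smul [SFinite μ]
    (hμ : ∀ θ : ℝ, MeasurePreserving (circleMap 0 1 θ • ·) μ μ) {F : E → ℝ≥0∞}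
    (hF : AEMeasurable F μ) :
    ∫⁻ z, (∫⁻ θ in Ioc 0 (2 * π), F (circleMap 0 1 θ • z)) ∂μ =
      ENNReal.ofReal (2 * π) * ∫⁻ z, F z ∂μ := by
  rw [lintegral_lintegral_swap (f := fun z θ => F (circleMap 0 1 θ • z))
    (hF.comp_quasiMeasurePreserving (quasiMeasurePreserving_circleMap_smul _ hμ))]
  have hinv : ∀ θ : ℝ, ∫⁻ z, F (circleMap 0 1 θ • z) ∂μ = ∫⁻ z, F z ∂μ := fun θ => by
    rw [← lintegral_map' (by rwa [(hμ θ).map_eq]) (hμ θ).measurable.aemeasurable,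
      (hμ θ).map_eq]
  simp_rw [hinv, lintegral_const, Measure.restrict_apply_univ, Real.volume_Ioc, sub_zero, mul_comm]

theorem DifferentiableOn.enorm_sq_mul_measure_univ_le_lintegral [SFinite μ]
    (hμ : ∀ θ : ℝ, MeasurePreserving (circleMap 0 1 θ • ·) μ μ) {f : E → ℂ} {U : Set E}
    (hf : DifferentiableOn ℂ f U) (hfm : AEMeasurable f μ)
    (hU : ∀ᵐ z ∂μ, ∀ u : ℂ, ‖u‖ ≤ 1 → u • z ∈ U) :
    ‖f 0‖ₑ ^ 2 * μ univ ≤ ∫⁻ z, ‖f z‖ₑ ^ 2 ∂μ := by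
  rw [← ENNReal.mul_le_mul_iff_left (ENNReal.ofReal_pos.2 Real.two_pi_pos).ne'
    ENNReal.ofReal_ne_top]
  calc ‖f 0‖ₑ ^ 2 * μ univ * ENNReal.ofReal (2 * π)
      = ∫⁻ _, ‖f 0‖ₑ ^ 2 * ENNReal.ofReal (2 * π) ∂μ := by rw [lintegral_const, mul_right_comm]
    _ ≤ ∫⁻ z, (∫⁻ θ in Ioc 0 (2 * π), ‖f (circleMap 0 1 θ • z)‖ₑ ^ 2) ∂μ :=
      lintegral_mono_ae <| hU.mono fun _ hz =>
        hf.enorm_sq_mul_two_pi_le_lintegral_circleMap_smul hz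
    _ = (∫⁻ z, ‖f z‖ₑ ^ 2 ∂μ) * ENNReal.ofReal (2 * π) := by
      rw [lintegral_lintegral_circleMap_smul hμ (hfm.enorm.pow_const 2), mul_comm]

end

theorem weighted_submean_polydisc_general (n : ℕ) (lam : Fin n → ℝ) (R : ℝ)
    (f : (Fin n → ℂ) → ℂ) (U : Set (Fin n → ℂ))
    (hUsub : {z : Fin n → ℂ | ∀ j, ‖z j‖ ≤ R} ⊆ U)
    (hf : DifferentiableOn ℂ f U) :
    (‖f 0‖₊ : ℝ≥0∞) ^ 2 *
        ∫⁻ z in {z : Fin n → ℂ | ∀ j, ‖z j‖ < R},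
          ENNReal.ofReal (Real.exp (-(∑ j : Fin n, lam j * ‖z j‖ ^ 2)))
      ≤ ∫⁻ z in {z : Fin n → ℂ | ∀ j, ‖z j‖ < R},
          (‖f z‖₊ : ℝ≥0∞) ^ 2 *
            ENNReal.ofReal (Real.exp (-(∑ j : Fin n, lam j * ‖z j‖ ^ 2))) := by
  set S := {z : Fin n → ℂ | ∀ j, ‖z j‖ < R}
  set w : (Fin n → ℂ) → ℝ≥0∞ := fun z => ENNReal.ofReal (Real.exp (-(∑ j, lam j * ‖z j‖ ^ 2)))
  have hS : MeasurableSet S := by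
    simpa only [S, ofPred_forall] using MeasurableSet.iInter fun j =>
      measurableSet_lt (measurable_pi_apply j).norm measurable_const
  have hw : Measurable w := by fun_prop
  set μ := (volume.restrict S).withDensity w
  have hμ : ∀ θ : ℝ, MeasurePreserving (circleMap 0 1 θ • ·) μ μ := fun θ =>
    measurePreserving_circleMap_smul_withDensity hS hw (by ext; simp [S]) (by simp [w])
  have hSμ : ∀ᵐ z ∂μ, z ∈ S := (withDensity_absolutelyContinuous _ _).ae_le (ae_restrict_mem hS)
  have hfm : AEMeasurable f μ :=
    ((hf.continuousOn.mono fun z hz => hUsub fun j => (hz j).le).aemeasurable hS).mono_ac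
      (withDensity_absolutelyContinuous _ _)
  have hU : ∀ᵐ z ∂μ, ∀ u : ℂ, ‖u‖ ≤ 1 → u • z ∈ U := hSμ.mono fun z hz u hu => hUsub fun j => by
    simpa [norm_mul] using (mul_le_of_le_one_left (norm_nonneg _) hu).trans (hz j).le
  have key := hf.enorm_sq_mul_measure_univ_le_lintegral hμ hfm hU
  rw [withDensity_apply _ MeasurableSet.univ, Measure.restrict_univ,
    lintegral_withDensity_eq_lintegral_mul_non_measurable _ hw
      (ae_of_all _ fun _ => ENNReal.ofReal_lt_top)] at key
  simpa only [Pi.mul_apply, mul_comm (w _), enorm_eq_nnnorm] using key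

/-- Weighted submean inequality on polydiscs: if `f` is holomorphic on an open
set containing the closed polydisc of polyradius `R` and `φ₀(z) = ∑ j, λ j |z j|²`
(the `λ j` arbitrary real numbers), then
`|f(0)|² ∫_{Δ_R} e^{−φ₀} ≤ ∫_{Δ_R} |f|² e^{−φ₀}`. -/
theorem weighted_submean_polydisc (n : ℕ) (lam : Fin n → ℝ) (R : ℝ) (hR : 0 < R)
    (f : (Fin n → ℂ) → ℂ) (U : Set (Fin n → ℂ)) (hU : IsOpen U)
    (hUsub : {z : Fin n → ℂ | ∀ j, ‖z j‖ ≤ R} ⊆ U)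
    (hf : DifferentiableOn ℂ f U) :
    (‖f 0‖₊ : ℝ≥0∞) ^ 2 *
        ∫⁻ z in {z : Fin n → ℂ | ∀ j, ‖z j‖ < R},
          ENNReal.ofReal (Real.exp (-(∑ j : Fin n, lam j * ‖z j‖ ^ 2)))
      ≤ ∫⁻ z in {z : Fin n → ℂ | ∀ j, ‖z j‖ < R},
          (‖f z‖₊ : ℝ≥0∞) ^ 2 *
            ENNReal.ofReal (Real.exp (-(∑ j : Fin n, lam j * ‖z j‖ ^ 2))) :=
  weighted_submean_polydisc_general n lam R f U hUsub hf
end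

section
/- Let n be a natural number, φ : ℂⁿ → ℝ a smooth function, and u, v : ℂⁿ → ℂ smooth functions with u compactly supported. Then for each j, ∫_{ℂⁿ} (∂u/∂z̄_j)(z) · conj(v(z)) · e^{−φ(z)} dz = ∫_{ℂⁿ} u(z) · conj( −(∂v/∂z_j)(z) + (∂φ/∂z_j)(z) · v(z) ) · e^{−φ(z)} dz, the integrals being with respect to Lebesgue measure on ℂⁿ ≅ ℝ^{2n}. -/
open scoped ENNReal NNReal

/-- The Wirtinger derivative `∂f/∂z_j` of `f : ℂⁿ → ℂ` at `a`. -/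
noncomputable def wderiv {n : ℕ} (j : Fin n) (f : (Fin n → ℂ) → ℂ) (a : Fin n → ℂ) : ℂ :=
  (1 / 2 : ℂ) *
    (fderiv ℝ f a (Pi.single j 1) - Complex.I * fderiv ℝ f a (Pi.single j Complex.I))

/-- The Wirtinger derivative `∂f/∂z̄_j` of `f : ℂⁿ → ℂ` at `a`. -/
noncomputable def wderivBar {n : ℕ} (j : Fin n) (f : (Fin n → ℂ) → ℂ) (a : Fin n → ℂ) : ℂ :=
  (1 / 2 : ℂ) *
    (fderiv ℝ f a (Pi.single j 1) + Complex.I * fderiv ℝ f a (Pi.single j Complex.I))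

open MeasureTheory Complex
lemma integral_fderiv_real_eq_zero {n : ℕ} (g : (Fin n → ℂ) → ℝ)
    (hg : ContDiff ℝ (⊤ : ℕ∞) g) (hsupp : HasCompactSupport g) (w : Fin n → ℂ) :
    ∫ z : Fin n → ℂ, fderiv ℝ g z w = 0 := by
  obtain ⟨C, hC⟩ := hg.lipschitzWith_of_hasCompactSupport hsupp (by simp)
  have h := LipschitzWith.integral_lineDeriv_mul_eq (μ := volume)
    ((LipschitzWith.const' (1:ℝ)) : LipschitzWith 0 _) hC hsupp (-w)
  have h1 : ∀ x : Fin n → ℂ, lineDeriv ℝ (fun _ : Fin n → ℂ => (1:ℝ)) x (-w) = 0 := fun x =>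
    ((hasFDerivAt_const (1:ℝ) x).hasLineDerivAt (-w)).lineDeriv.trans (by simp)
  have h2 : ∀ z, lineDeriv ℝ g z (- -w) = fderiv ℝ g z w := fun z => by
    simpa using ((hg.differentiable (by simp) z).hasFDerivAt.hasLineDerivAt w).lineDeriv
  simp only [h1, zero_mul, integral_zero, h2, mul_one] at h
  exact h.symm

lemma integral_fderiv_cplx_eq_zero {n : ℕ} (g : (Fin n → ℂ) → ℂ)
    (hg : ContDiff ℝ (⊤ : ℕ∞) g) (hsupp : HasCompactSupport g) (w : Fin n → ℂ) :
    ∫ z : Fin n → ℂ, fderiv ℝ g z w = 0 := by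
  have hre : ∀ z, fderiv ℝ (fun z => (g z).re) z =
      Complex.reCLM.comp (fderiv ℝ g z) := fun z =>
    (Complex.reCLM.hasFDerivAt.comp z (hg.differentiable (by simp) z).hasFDerivAt).fderiv
  have him : ∀ z, fderiv ℝ (fun z => (g z).im) z =
      Complex.imCLM.comp (fderiv ℝ g z) := fun z =>
    (Complex.imCLM.hasFDerivAt.comp z (hg.differentiable (by simp) z).hasFDerivAt).fderiv
  have e1 := integral_fderiv_real_eq_zero (fun z => (g z).re)
    (Complex.reCLM.contDiff.comp hg) (hsupp.comp_left rfl) w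
  have e2 := integral_fderiv_real_eq_zero (fun z => (g z).im)
    (Complex.imCLM.contDiff.comp hg) (hsupp.comp_left rfl) w
  simp only [hre, him, ContinuousLinearMap.comp_apply] at e1 e2
  have hgc : Continuous fun z => (fderiv ℝ g z) w :=
    (hg.continuous_fderiv (by simp)).clm_apply continuous_const
  have hint : Integrable (fun z : Fin n → ℂ => (fderiv ℝ g z) w) :=
    hgc.integrable_of_hasCompactSupport ((hsupp.fderiv (𝕜 := ℝ)).comp_left (g := fun L : (Fin n → ℂ) →L[ℝ] ℂ => L w) rfl)
  have : ∀ z : Fin n → ℂ, fderiv ℝ g z w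
      = ((Complex.reCLM ((fderiv ℝ g z) w) : ℝ) : ℂ)
        + ((Complex.imCLM ((fderiv ℝ g z) w) : ℝ) : ℂ) * Complex.I := fun z => by
    simp [Complex.re_add_im]
  rw [integral_congr_ae (Filter.Eventually.of_forall this)]
  have hcs : HasCompactSupport (fun z : Fin n → ℂ => (fderiv ℝ g z) w) :=
    (hsupp.fderiv (𝕜 := ℝ)).comp_left (g := fun L : (Fin n → ℂ) →L[ℝ] ℂ => L w) rfl
  have i1 : Integrable (fun z : Fin n → ℂ => ((Complex.reCLM ((fderiv ℝ g z) w) : ℝ) : ℂ)) :=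
    (Complex.continuous_ofReal.comp (Complex.reCLM.continuous.comp hgc)).integrable_of_hasCompactSupport
      (hcs.comp_left (g := fun c : ℂ => ((c.re : ℝ) : ℂ)) (by simp))
  have i2 : Integrable (fun z : Fin n → ℂ => ((Complex.imCLM ((fderiv ℝ g z) w) : ℝ) : ℂ) * Complex.I) :=
    ((Complex.continuous_ofReal.comp (Complex.imCLM.continuous.comp hgc)).mul continuous_const).integrable_of_hasCompactSupport
      (hcs.comp_left (g := fun c : ℂ => ((c.im : ℝ) : ℂ) * Complex.I) (by simp))
  rw [integral_add i1 i2, integral_mul_const]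
  have r1 : ∫ z : Fin n → ℂ, ((Complex.reCLM ((fderiv ℝ g z) w) : ℝ) : ℂ)
      = ((∫ z : Fin n → ℂ, Complex.reCLM ((fderiv ℝ g z) w) : ℝ) : ℂ) :=
    Complex.ofRealCLM.integral_comp_comm hint.re
  have r2 : ∫ z : Fin n → ℂ, ((Complex.imCLM ((fderiv ℝ g z) w) : ℝ) : ℂ)
      = ((∫ z : Fin n → ℂ, Complex.imCLM ((fderiv ℝ g z) w) : ℝ) : ℂ) :=
    Complex.ofRealCLM.integral_comp_comm hint.im
  rw [r1, r2, e1, e2]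
  simp

/-- Integration by parts for the weighted inner product
`⟨u,v⟩_φ = ∫ u conj(v) e^{−φ}`: the formal adjoint of `∂/∂z̄_j` is
`v ↦ −∂v/∂z_j + (∂φ/∂z_j)·v`, provided `u` is compactly supported. -/
theorem wirtinger_adjoint_integration_by_parts (n : ℕ)
    (φ : (Fin n → ℂ) → ℝ) (hφ : ContDiff ℝ (⊤ : ℕ∞) φ)
    (u v : (Fin n → ℂ) → ℂ) (hu : ContDiff ℝ (⊤ : ℕ∞) u) (hv : ContDiff ℝ (⊤ : ℕ∞) v)
    (hsupp : HasCompactSupport u) (j : Fin n) :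
    ∫ z : Fin n → ℂ,
        wderivBar j u z * (starRingEnd ℂ) (v z) * Complex.exp (-(φ z : ℂ))
      = ∫ z : Fin n → ℂ,
          u z *
            (starRingEnd ℂ)
              (-(wderiv j v z) + wderiv j (fun w => (φ w : ℂ)) z * v z) *
            Complex.exp (-(φ z : ℂ)) := by
  set w₁ : Fin n → ℂ := Pi.single j 1 with hw₁
  set w₂ : Fin n → ℂ := Pi.single j Complex.I with hw₂
  set F : (Fin n → ℂ) → ℂ := fun z => u z * (starRingEnd ℂ) (v z) * Complex.exp (-(φ z : ℂ))
    with hFdef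
  -- smoothness of F
  have hconj : ContDiff ℝ (⊤ : ℕ∞) fun z => (starRingEnd ℂ) (v z) :=
    Complex.conjCLE.toContinuousLinearMap.contDiff.comp hv
  have hexp : ContDiff ℝ (⊤ : ℕ∞) fun z : Fin n → ℂ => Complex.exp (-(φ z : ℂ)) :=
    Complex.contDiff_exp.comp ((Complex.ofRealCLM.contDiff.comp hφ).neg)
  have hF : ContDiff ℝ (⊤ : ℕ∞) F := (hu.mul hconj).mul hexp
  have hFs : HasCompactSupport F := (hsupp.mul_right).mul_right
  -- pointwise derivative of F
  have key : ∀ (z w : Fin n → ℂ),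
      fderiv ℝ F z w
        = fderiv ℝ u z w * (starRingEnd ℂ) (v z) * Complex.exp (-(φ z : ℂ))
          + u z * (starRingEnd ℂ) (fderiv ℝ v z w) * Complex.exp (-(φ z : ℂ))
          - u z * (starRingEnd ℂ) (v z) * Complex.exp (-(φ z : ℂ)) * (fderiv ℝ φ z w : ℂ) := by
    intro z w
    have hu' := (hu.differentiable (by simp) z).hasFDerivAt
    have hv' := (hv.differentiable (by simp) z).hasFDerivAt
    have hφ' := (hφ.differentiable (by simp) z).hasFDerivAt
    have hcv : HasFDerivAt (fun z => (starRingEnd ℂ) (v z))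
        ((Complex.conjCLE.toContinuousLinearMap).comp (fderiv ℝ v z)) z :=
      (Complex.conjCLE.toContinuousLinearMap.hasFDerivAt).comp z hv'
    have hg : HasFDerivAt (fun z : Fin n → ℂ => -((φ z : ℂ)))
        (-(Complex.ofRealCLM.comp (fderiv ℝ φ z))) z :=
      (Complex.ofRealCLM.hasFDerivAt.comp z hφ').neg
    have hE : HasFDerivAt (fun z : Fin n → ℂ => Complex.exp (-(φ z : ℂ)))
        (Complex.exp (-(φ z : ℂ)) • -(Complex.ofRealCLM.comp (fderiv ℝ φ z))) z :=
      (Complex.hasDerivAt_exp _).comp_hasFDerivAt z hg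
    have hFd : HasFDerivAt F _ z := (hu'.mul hcv).mul hE
    rw [hFd.fderiv]
    simp only [ContinuousLinearMap.add_apply, ContinuousLinearMap.smul_apply,
      ContinuousLinearMap.comp_apply, ContinuousLinearMap.neg_apply,
      ContinuousLinearEquiv.coe_coe, Complex.conjCLE_apply, Complex.ofRealCLM_apply,
      smul_eq_mul, Pi.mul_apply]
    ring
  -- derivative of the complexified φ
  have hφc : ∀ z : Fin n → ℂ, fderiv ℝ (fun w => ((φ w : ℝ) : ℂ)) z
      = Complex.ofRealCLM.comp (fderiv ℝ φ z) := fun z =>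
    (Complex.ofRealCLM.hasFDerivAt.comp z (hφ.differentiable (by simp) z).hasFDerivAt).fderiv
  -- the pointwise algebraic identity
  have pointwise : ∀ z : Fin n → ℂ,
      wderivBar j u z * (starRingEnd ℂ) (v z) * Complex.exp (-(φ z : ℂ))
        = wderivBar j F z
          + u z * (starRingEnd ℂ)
              (-(wderiv j v z) + wderiv j (fun w => (φ w : ℂ)) z * v z) *
            Complex.exp (-(φ z : ℂ)) := by
    intro z
    simp only [wderiv, wderivBar, key, hφc, ContinuousLinearMap.comp_apply,
      Complex.ofRealCLM_apply, map_add, map_neg, map_mul, map_sub, map_div₀, map_one,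
      map_ofNat, Complex.conj_I, Complex.conj_ofReal]
    ring
  -- integrability facts
  have contfd : ∀ w : Fin n → ℂ, Continuous fun z => fderiv ℝ F z w := fun w =>
    (hF.continuous_fderiv (by simp)).clm_apply continuous_const
  have hFscs : ∀ w : Fin n → ℂ, HasCompactSupport fun z => fderiv ℝ F z w := fun w =>
    (hFs.fderiv (𝕜 := ℝ)).comp_left (g := fun L : (Fin n → ℂ) →L[ℝ] ℂ => L w) rfl
  have intF : ∀ w : Fin n → ℂ, Integrable fun z : Fin n → ℂ => fderiv ℝ F z w := fun w =>
    (contfd w).integrable_of_hasCompactSupport (hFscs w)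
  -- the integral of the bar-derivative of F vanishes
  have hzero : ∫ z : Fin n → ℂ, wderivBar j F z = 0 := by
    have : (fun z : Fin n → ℂ => wderivBar j F z)
        = fun z => (1/2 : ℂ) * (fderiv ℝ F z w₁ + Complex.I * fderiv ℝ F z w₂) := rfl
    rw [this]
    rw [MeasureTheory.integral_const_mul, integral_add (intF w₁) ((intF w₂).const_mul _),
      MeasureTheory.integral_const_mul, integral_fderiv_cplx_eq_zero F hF hFs w₁,
      integral_fderiv_cplx_eq_zero F hF hFs w₂]
    simp
  -- integrability of both sides
  have hwc : ∀ w : Fin n → ℂ, Continuous fun z => fderiv ℝ v z w := fun w =>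
    (hv.continuous_fderiv (by simp)).clm_apply continuous_const
  have hφwc : ∀ w : Fin n → ℂ, Continuous fun z => fderiv ℝ φ z w := fun w =>
    (hφ.continuous_fderiv (by simp)).clm_apply continuous_const
  have contRHS : Continuous fun z : Fin n → ℂ =>
      u z * (starRingEnd ℂ) (-(wderiv j v z) + wderiv j (fun w => (φ w : ℂ)) z * v z) *
        Complex.exp (-(φ z : ℂ)) := by
    apply Continuous.mul
    apply Continuous.mul hu.continuous
    · apply Complex.continuous_conj.comp
      apply Continuous.add
      · exact (continuous_const.mul ((hwc w₁).sub (continuous_const.mul (hwc w₂)))).neg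
      · apply Continuous.mul ?_ hv.continuous
        have hφcw : ∀ w : Fin n → ℂ,
            Continuous fun z => fderiv ℝ (fun w' => ((φ w' : ℝ) : ℂ)) z w := fun w =>
          ((Complex.ofRealCLM.contDiff.comp hφ).continuous_fderiv (by simp)).clm_apply
            continuous_const
        exact continuous_const.mul ((hφcw _).sub (continuous_const.mul (hφcw _)))
    · exact hexp.continuous
  have intRHS : Integrable fun z : Fin n → ℂ =>
      u z * (starRingEnd ℂ) (-(wderiv j v z) + wderiv j (fun w => (φ w : ℂ)) z * v z) *
        Complex.exp (-(φ z : ℂ)) :=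
    contRHS.integrable_of_hasCompactSupport ((hsupp.mul_right).mul_right)
  have contBarF : Continuous fun z : Fin n → ℂ => wderivBar j F z := by
    have : (fun z : Fin n → ℂ => wderivBar j F z)
        = fun z => (1/2 : ℂ) * (fderiv ℝ F z w₁ + Complex.I * fderiv ℝ F z w₂) := rfl
    rw [this]
    exact continuous_const.mul ((contfd w₁).add (continuous_const.mul (contfd w₂)))
  have intBarF : Integrable fun z : Fin n → ℂ => wderivBar j F z := by
    apply contBarF.integrable_of_hasCompactSupport
    have : (fun z : Fin n → ℂ => wderivBar j F z)
        = fun z => (1/2 : ℂ) * (fderiv ℝ F z w₁ + Complex.I * fderiv ℝ F z w₂) := rfl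
    rw [this]
    exact (((hFscs w₁).add ((hFscs w₂).mul_left)).mul_left)
  calc ∫ z : Fin n → ℂ, wderivBar j u z * (starRingEnd ℂ) (v z) * Complex.exp (-(φ z : ℂ))
      = ∫ z : Fin n → ℂ, (wderivBar j F z
          + u z * (starRingEnd ℂ)
              (-(wderiv j v z) + wderiv j (fun w => (φ w : ℂ)) z * v z) *
            Complex.exp (-(φ z : ℂ))) := by
        exact integral_congr_ae (Filter.Eventually.of_forall pointwise)
    _ = _ := by
        rw [integral_add intBarF intRHS, hzero, zero_add]
end

section
/- Let n be a natural number, λ : Fin n → ℝ, and I ⊆ Fin n. Let f : ℂⁿ → ℂ be smooth and satisfy the model harmonicity equations for (I, λ). Then there exists an entire function F : ℂⁿ → ℂ such that f(z) = exp(Σ_{j∈I} λ_j |z_j|²) · F(ζ(z)) for all z ∈ ℂⁿ, where ζ(z)_j = conj(z_j) if j ∈ I and ζ(z)_j = z_j if j ∉ I. Consequently |f(z)|² e^{−φ₀(z)} = |F(ζ(z))|² e^{−Φ_I(z)} for all z, where Φ_I(z) = Σ_{j∈I} (−λ_j)|z_j|² + Σ_{j∉I} λ_j |z_j|². -/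
open scoped ENNReal NNReal

/-- The formal adjoint `∂_j^* g = −∂g/∂z_j + λ_j·conj(z_j)·g` with respect to the
weight `φ₀(z) = ∑ j, λ j |z j|²`. -/
noncomputable def adjOp {n : ℕ} (lam : Fin n → ℝ) (j : Fin n)
    (g : (Fin n → ℂ) → ℂ) (z : Fin n → ℂ) : ℂ :=
  -(wderiv j g z) + (lam j : ℂ) * (starRingEnd ℂ) (z j) * g z

/-- `f` satisfies the model harmonicity equations for `(I, λ)`:
`∂_j^* f = 0` for `j ∈ I` and `∂f/∂z̄_j = 0` for `j ∉ I`. -/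
def ModelHarmonic {n : ℕ} (lam : Fin n → ℝ) (I : Finset (Fin n))
    (f : (Fin n → ℂ) → ℂ) : Prop :=
  (∀ j ∈ I, ∀ z : Fin n → ℂ, adjOp lam j f z = 0) ∧
    (∀ j ∉ I, ∀ z : Fin n → ℂ, wderivBar j f z = 0)

open Complex ContinuousLinearMap

noncomputable def clmOfCR {n : ℕ} (L : (Fin n → ℂ) →L[ℝ] ℂ)
    (h : ∀ v, L (Complex.I • v) = Complex.I * L v) : (Fin n → ℂ) →L[ℂ] ℂ where
  toFun := L
  map_add' := L.map_add
  map_smul' := by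
    intro c v
    simp only [RingHom.id_apply]
    have h1 : c • v = (c.re : ℝ) • v + (c.im : ℝ) • (Complex.I • v) := by
      funext k
      simp only [Pi.add_apply, Pi.smul_apply, smul_eq_mul, Complex.real_smul]
      conv_lhs => rw [← Complex.re_add_im c]
      ring
    rw [h1, map_add, map_smul, map_smul, h]
    simp only [Complex.real_smul, smul_eq_mul]
    conv_rhs => rw [← Complex.re_add_im c]
    ring
  cont := L.cont

theorem cr_of_basis {n : ℕ} (L : (Fin n → ℂ) →L[ℝ] ℂ)
    (h : ∀ j, L (Pi.single j Complex.I) = Complex.I * L (Pi.single j 1)) :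
    ∀ v, L (Complex.I • v) = Complex.I * L v := by
  have key : ∀ (j : Fin n) (c : ℂ), L (Pi.single j c)
      = (c.re : ℝ) • L (Pi.single j 1) + (c.im : ℝ) • L (Pi.single j Complex.I) := by
    intro j c
    have hsingle : Pi.single j c
        = (c.re : ℝ) • (Pi.single j (1 : ℂ) : Fin n → ℂ)
          + (c.im : ℝ) • (Pi.single j Complex.I : Fin n → ℂ) := by
      funext k
      rcases eq_or_ne k j with rfl | hk
      · simp only [Pi.add_apply, Pi.smul_apply, Pi.single_eq_same, smul_eq_mul,
          Complex.real_smul]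
        conv_lhs => rw [← Complex.re_add_im c]
        ring
      · simp [Pi.single_eq_of_ne hk]
    rw [hsingle, map_add, map_smul, map_smul]
  intro v
  have hv : v = ∑ j, Pi.single j (v j) := (Finset.univ_sum_single v).symm
  have hiv : Complex.I • v = ∑ j, Pi.single j (Complex.I * v j) := by
    rw [Finset.univ_sum_single (fun j => Complex.I * v j)]
    funext k; simp
  rw [hiv, map_sum]
  conv_rhs => rw [hv]
  rw [map_sum, Finset.mul_sum]
  refine Finset.sum_congr rfl fun j _ => ?_
  rw [key j (Complex.I * v j), key j (v j), h j]
  simp only [Complex.real_smul, Complex.mul_re, Complex.mul_im, Complex.I_re, Complex.I_im]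
  push_cast
  linear_combination (-(v j).im * L (Pi.single j 1)) * Complex.I_sq

/-- Structure of solutions to the model harmonicity equations: any such `f` is
`exp(∑_{j∈I} λ_j |z_j|²)` times an entire function of `(z̄_j)_{j∈I}, (z_j)_{j∉I}`,
and hence `|f|² e^{−φ₀} = |F ∘ ζ|² e^{−Φ_I}` where
`Φ_I(z) = ∑_{j∈I} (−λ_j)|z_j|² + ∑_{j∉I} λ_j |z_j|²`. -/
theorem model_harmonic_structure (n : ℕ) (lam : Fin n → ℝ) (I : Finset (Fin n))
    (f : (Fin n → ℂ) → ℂ) (hf : ContDiff ℝ (⊤ : ℕ∞) f)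
    (hharm : ModelHarmonic lam I f) :
    ∃ F : (Fin n → ℂ) → ℂ, Differentiable ℂ F ∧
      (∀ z : Fin n → ℂ,
        f z = Complex.exp ((∑ j ∈ I, lam j * ‖z j‖ ^ 2 : ℝ) : ℂ) *
          F (fun j => if j ∈ I then (starRingEnd ℂ) (z j) else z j)) ∧
      (∀ z : Fin n → ℂ,
        ‖f z‖ ^ 2 * Real.exp (-(∑ j : Fin n, lam j * ‖z j‖ ^ 2)) =
          ‖F (fun j => if j ∈ I then (starRingEnd ℂ) (z j) else z j)‖ ^ 2 *
            Real.exp (-((∑ j ∈ I, -lam j * ‖z j‖ ^ 2) +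
              ∑ j ∈ Iᶜ, lam j * ‖z j‖ ^ 2))) := by
  classical
  -- the conjugation-twist map
  set zeta : (Fin n → ℂ) →L[ℝ] (Fin n → ℂ) :=
    ContinuousLinearMap.pi (fun j => if j ∈ I then
      (Complex.conjCLE.toContinuousLinearMap.comp
        (ContinuousLinearMap.proj (R := ℝ) (φ := fun _ : Fin n => ℂ) j))
      else ContinuousLinearMap.proj j) with hzeta
  have zeta_apply : ∀ (z : Fin n → ℂ) (k : Fin n),
      zeta z k = if k ∈ I then (starRingEnd ℂ) (z k) else z k := by
    intro z k
    rw [hzeta]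
    by_cases hk : k ∈ I <;>
      simp [ContinuousLinearMap.pi_apply, hk]
  have hzz : ∀ z, zeta (zeta z) = z := by
    intro z; funext k
    rw [zeta_apply, zeta_apply]
    by_cases hk : k ∈ I <;> simp [hk]
  -- the weight and its derivative
  set S : (Fin n → ℂ) → ℂ :=
    fun z => ∑ j ∈ I, (lam j : ℂ) * (z j * (starRingEnd ℂ) (z j)) with hSdef
  set SL : (Fin n → ℂ) → ((Fin n → ℂ) →L[ℝ] ℂ) := fun z =>
    ∑ j ∈ I, (lam j : ℂ) •
      (z j • (Complex.conjCLE.toContinuousLinearMap.comp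
          (ContinuousLinearMap.proj (R := ℝ) (φ := fun _ : Fin n => ℂ) j))
        + (starRingEnd ℂ) (z j) •
            (ContinuousLinearMap.proj (R := ℝ) (φ := fun _ : Fin n => ℂ) j)) with hSLdef
  have hSd : ∀ z, HasFDerivAt S (SL z) z := by
    intro z
    rw [hSdef, hSLdef]
    apply HasFDerivAt.fun_sum
    intro j hj
    have h1 : HasFDerivAt (fun z : Fin n → ℂ => z j)
        (ContinuousLinearMap.proj (R := ℝ) (φ := fun _ : Fin n => ℂ) j) z :=
      (ContinuousLinearMap.proj (R := ℝ) (φ := fun _ : Fin n => ℂ) j).hasFDerivAt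
    have h2 : HasFDerivAt (fun z : Fin n → ℂ => (starRingEnd ℂ) (z j))
        (Complex.conjCLE.toContinuousLinearMap.comp
          (ContinuousLinearMap.proj (R := ℝ) (φ := fun _ : Fin n => ℂ) j)) z :=
      (Complex.conjCLE.toContinuousLinearMap.comp
        (ContinuousLinearMap.proj (R := ℝ) (φ := fun _ : Fin n => ℂ) j)).hasFDerivAt
    exact (h1.mul h2).const_mul _
  have hSLsingle : ∀ (z : Fin n → ℂ) (j : Fin n) (c : ℂ),
      SL z (Pi.single j c) =
        if j ∈ I then
          (lam j : ℂ) * (z j * (starRingEnd ℂ) c + (starRingEnd ℂ) (z j) * c)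
        else 0 := by
    intro z j c
    rw [hSLdef]
    simp only [ContinuousLinearMap.sum_apply, ContinuousLinearMap.smul_apply,
      ContinuousLinearMap.add_apply, ContinuousLinearMap.coe_comp', Function.comp_apply,
      ContinuousLinearMap.proj_apply, ContinuousLinearEquiv.coe_coe, Complex.conjCLE_apply,
      smul_eq_mul]
    by_cases hj : j ∈ I
    · rw [if_pos hj]
      rw [Finset.sum_eq_single j]
      · simp [Pi.single_eq_same, mul_add]
      · intro k hk hkj
        rw [Pi.single_eq_of_ne hkj]
        simp
      · intro hj'; exact absurd hj hj'
    · rw [if_neg hj]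
      apply Finset.sum_eq_zero
      intro k hk
      have hkj : k ≠ j := fun h => hj (h ▸ hk)
      rw [Pi.single_eq_of_ne hkj]
      simp
  -- the reduced function G and its derivative
  set G : (Fin n → ℂ) → ℂ := fun z => f z * Complex.exp (-(S z)) with hGdef
  have hfd : ∀ z, HasFDerivAt f (fderiv ℝ f z) z :=
    fun z => (hf.differentiable (by simp) z).hasFDerivAt
  set G' : (Fin n → ℂ) → ((Fin n → ℂ) →L[ℝ] ℂ) := fun z =>
    f z • (Complex.exp (-(S z)) • (-(SL z))) + Complex.exp (-(S z)) • fderiv ℝ f z with hG'def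
  have hGd : ∀ z, HasFDerivAt G (G' z) z := by
    intro z
    rw [hGdef, hG'def]
    exact (hfd z).mul ((hSd z).neg.cexp)
  -- vanishing identities for G'
  have hG1 : ∀ z, ∀ j ∈ I, G' z (Pi.single j Complex.I)
      = -(Complex.I * G' z (Pi.single j 1)) := by
    intro z j hj
    have E1 := hharm.1 j hj z
    simp only [adjOp, wderiv] at E1
    rw [hG'def]
    simp only [ContinuousLinearMap.add_apply, ContinuousLinearMap.smul_apply,
      ContinuousLinearMap.neg_apply, smul_eq_mul]
    rw [hSLsingle, hSLsingle, if_pos hj, if_pos hj]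
    simp only [Complex.conj_I, map_one]
    linear_combination (-(2 * Complex.I * Complex.exp (-(S z)))) * E1 +
      (Complex.exp (-(S z)) * fderiv ℝ f z (Pi.single j Complex.I)) * Complex.I_sq
  have hG2 : ∀ z, ∀ j ∉ I, G' z (Pi.single j Complex.I)
      = Complex.I * G' z (Pi.single j 1) := by
    intro z j hj
    have E2 := hharm.2 j hj z
    simp only [wderivBar] at E2
    rw [hG'def]
    simp only [ContinuousLinearMap.add_apply, ContinuousLinearMap.smul_apply,
      ContinuousLinearMap.neg_apply, smul_eq_mul]
    rw [hSLsingle, hSLsingle, if_neg hj, if_neg hj]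
    linear_combination (-(2 * Complex.I * Complex.exp (-(S z)))) * E2 +
      (Complex.exp (-(S z)) * fderiv ℝ f z (Pi.single j Complex.I)) * Complex.I_sq
  -- the entire function F
  set F : (Fin n → ℂ) → ℂ := fun w => G (zeta w) with hFdef
  have hFd : ∀ a, HasFDerivAt F ((G' (zeta a)).comp zeta) a := by
    intro a
    rw [hFdef]
    exact (hGd (zeta a)).comp a zeta.hasFDerivAt
  have hzs : ∀ (j : Fin n) (c : ℂ),
      zeta (Pi.single j c) = Pi.single j (if j ∈ I then (starRingEnd ℂ) c else c) := by
    intro j c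
    funext k
    rw [zeta_apply]
    rcases eq_or_ne k j with rfl | hk
    · simp
    · by_cases hkI : k ∈ I <;> simp [hkI, Pi.single_eq_of_ne hk]
  have hFcr : ∀ a j, ((G' (zeta a)).comp zeta) (Pi.single j Complex.I)
      = Complex.I * ((G' (zeta a)).comp zeta) (Pi.single j 1) := by
    intro a j
    simp only [ContinuousLinearMap.coe_comp', Function.comp_apply]
    rw [hzs, hzs]
    by_cases hj : j ∈ I
    · rw [if_pos hj, if_pos hj, Complex.conj_I, map_one]
      have hneg1 : (Pi.single j (-Complex.I) : Fin n → ℂ) = -Pi.single j Complex.I := by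
        funext k
        rcases eq_or_ne k j with rfl | hk
        · simp
        · simp [Pi.single_eq_of_ne hk]
      rw [hneg1, map_neg, hG1 (zeta a) j hj, neg_neg]
    · rw [if_neg hj, if_neg hj]
      exact hG2 (zeta a) j hj
  have hFdiff : Differentiable ℂ F := by
    intro a
    have hreal : DifferentiableAt ℝ F a := (hFd a).differentiableAt
    rw [differentiableAt_iff_restrictScalars ℝ hreal]
    refine ⟨clmOfCR ((G' (zeta a)).comp zeta) (cr_of_basis _ (hFcr a)), ?_⟩
    rw [(hFd a).fderiv]
    ext v
    rfl
  -- the representation formula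
  have hrep : ∀ z : Fin n → ℂ,
      f z = Complex.exp ((∑ j ∈ I, lam j * ‖z j‖ ^ 2 : ℝ) : ℂ) *
        F (fun j => if j ∈ I then (starRingEnd ℂ) (z j) else z j) := by
    intro z
    have h1 : (fun j => if j ∈ I then (starRingEnd ℂ) (z j) else z j) = zeta z := by
      funext k; rw [zeta_apply]
    rw [h1]
    have h2 : F (zeta z) = G z := by rw [hFdef]; simp only; rw [hzz]
    rw [h2, hGdef]
    have hSz : S z = ((∑ j ∈ I, lam j * ‖z j‖ ^ 2 : ℝ) : ℂ) := by
      rw [hSdef]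
      push_cast
      refine Finset.sum_congr rfl fun j _ => ?_
      rw [Complex.mul_conj]
      norm_cast
      rw [Complex.normSq_eq_norm_sq]
    simp only
    rw [hSz]
    rw [show Complex.exp ((∑ j ∈ I, lam j * ‖z j‖ ^ 2 : ℝ) : ℂ) *
        (f z * Complex.exp (-((∑ j ∈ I, lam j * ‖z j‖ ^ 2 : ℝ) : ℂ))) =
        f z * (Complex.exp ((∑ j ∈ I, lam j * ‖z j‖ ^ 2 : ℝ) : ℂ) *
          Complex.exp (-((∑ j ∈ I, lam j * ‖z j‖ ^ 2 : ℝ) : ℂ))) from by ring]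
    rw [← Complex.exp_add, add_neg_cancel, Complex.exp_zero, mul_one]
  refine ⟨F, hFdiff, hrep, ?_⟩
  intro z
  rw [hrep z]
  set w : ℝ := ‖F (fun j => if j ∈ I then (starRingEnd ℂ) (z j) else z j)‖ with hw
  set s : ℝ := ∑ j ∈ I, lam j * ‖z j‖ ^ 2 with hs
  have hnorm : ‖Complex.exp ((s : ℝ) : ℂ)‖ = Real.exp s := by
    rw [Complex.norm_exp, Complex.ofReal_re]
  have hsplit : (∑ j : Fin n, lam j * ‖z j‖ ^ 2)
      = s + ∑ j ∈ Iᶜ, lam j * ‖z j‖ ^ 2 := (Finset.sum_add_sum_compl I _).symm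
  have hneg : (∑ j ∈ I, -lam j * ‖z j‖ ^ 2) = -s := by
    rw [hs, ← Finset.sum_neg_distrib]
    exact Finset.sum_congr rfl fun j _ => by ring
  rw [norm_mul, hnorm, hsplit, hneg]
  have key : ∀ (a b w' : ℝ), (Real.exp a * w') ^ 2 * Real.exp (-(a + b))
      = w' ^ 2 * Real.exp (-(-a + b)) := by
    intro a b w'
    have h3 : Real.exp a ^ 2 * Real.exp (-(a + b)) = Real.exp (-(-a + b)) := by
      rw [pow_two, ← Real.exp_add, ← Real.exp_add]
      congr 1; ring
    calc (Real.exp a * w') ^ 2 * Real.exp (-(a + b))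
        = w' ^ 2 * (Real.exp a ^ 2 * Real.exp (-(a + b))) := by ring
      _ = w' ^ 2 * Real.exp (-(-a + b)) := by rw [h3]
  exact key s _ w
end

section
/- Let n be a natural number and λ : Fin n → ℝ with λ_j ≠ 0 for all j, and let I = {j : λ_j < 0}. Then for every smooth f : ℂⁿ → ℂ satisfying the model harmonicity equations for (I, λ), the inequality π^n · |f(0)|² ≤ (∏_j |λ_j|) · ‖f‖²_{φ₀} holds, where both sides are computed in the extended nonnegative reals [0,∞]. -/
open scoped ENNReal NNReal

/-- The weight `φ₀(z) = ∑ j, λ j |z j|²`. -/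
noncomputable def phi0 {n : ℕ} (lam : Fin n → ℝ) (z : Fin n → ℂ) : ℝ :=
  ∑ j : Fin n, lam j * ‖z j‖ ^ 2

/-- The weighted `L²`-norm squared `‖f‖²_{φ₀} = ∫ |f|² e^{−φ₀}`, in `[0,∞]`. -/
noncomputable def l2normSq {n : ℕ} (lam : Fin n → ℝ) (f : (Fin n → ℂ) → ℂ) : ℝ≥0∞ :=
  ∫⁻ z : Fin n → ℂ, (‖f z‖₊ : ℝ≥0∞) ^ 2 * ENNReal.ofReal (Real.exp (-(phi0 lam z)))



open MeasureTheory Set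
open scoped Real



theorem my_lintegral_polar_aux (g : ℝ × ℝ → ℝ≥0∞) :
    ∫⁻ p, g p = ∫⁻ p in polarCoord.target, ENNReal.ofReal p.1 * g (polarCoord.symm p) := by
  set B : ℝ × ℝ → ℝ × ℝ →L[ℝ] ℝ × ℝ := fun p =>
    LinearMap.toContinuousLinearMap (Matrix.toLin (Module.Basis.finTwoProd ℝ) (Module.Basis.finTwoProd ℝ)
      !![Real.cos p.2, -p.1 * Real.sin p.2; Real.sin p.2, p.1 * Real.cos p.2])
  have A : ∀ p ∈ polarCoord.target, HasFDerivWithinAt polarCoord.symm (B p) polarCoord.target p :=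
    fun p _ => (hasFDerivAt_polarCoord_symm p).hasFDerivWithinAt
  have B_det : ∀ p, (B p).det = p.1 := by
    intro p
    conv_rhs => rw [← one_mul p.1, ← Real.cos_sq_add_sin_sq p.2]
    simp only [B, neg_mul, LinearMap.det_toContinuousLinearMap, LinearMap.det_toLin,
      Matrix.det_fin_two_of, sub_neg_eq_add]
    ring
  calc ∫⁻ p, g p = ∫⁻ p in polarCoord.source, g p := by
        rw [← setLIntegral_univ]
        exact (setLIntegral_congr polarCoord_source_ae_eq_univ).symm
    _ = ∫⁻ p in polarCoord.symm '' polarCoord.target, g p := by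
        rw [polarCoord.symm_image_target_eq_source]
    _ = ∫⁻ p in polarCoord.target, ENNReal.ofReal |(B p).det| * g (polarCoord.symm p) :=
        lintegral_image_eq_lintegral_abs_det_fderiv_mul volume
          polarCoord.open_target.measurableSet A polarCoord.symm.injOn g
    _ = ∫⁻ p in polarCoord.target, ENNReal.ofReal p.1 * g (polarCoord.symm p) := by
        refine setLIntegral_congr_fun polarCoord.open_target.measurableSet ?_
        exact fun p hp => by rw [B_det, abs_of_pos hp.1]

theorem my_lintegral_polar (g : ℂ → ℝ≥0∞) (hg : Measurable g) :
    ∫⁻ z, g z = ∫⁻ p in polarCoord.target, ENNReal.ofReal p.1 * g (Complex.polarCoord.symm p) := by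
  rw [← (Complex.volume_preserving_equiv_real_prod.symm).lintegral_comp hg,
    my_lintegral_polar_aux]
  rfl



theorem my_meanvalue (F : ℂ → ℂ) (hF : Differentiable ℂ F) {r : ℝ} (hr : 0 < r) :
    ∫ θ in (-π)..π, F (circleMap 0 r θ) = (2 * π : ℝ) • F 0 := by
  have h : DiffContOnCl ℂ F (Metric.ball 0 r) :=
    ⟨hF.differentiableOn, hF.continuous.continuousOn⟩
  have h2 := h.circleIntegral_sub_inv_smul (w := 0) (Metric.mem_ball_self hr)
  rw [circleIntegral] at h2
  simp only [sub_zero, deriv_circleMap, smul_smul] at h2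
  have h3 : ∀ θ : ℝ, circleMap 0 r θ * Complex.I * (circleMap 0 r θ)⁻¹ = Complex.I := by
    intro θ
    field_simp [circleMap_ne_center hr.ne']
  simp only [h3] at h2
  -- h2 : ∫ θ in 0..2π, I • F (circleMap 0 r θ) = (2πI) • F 0
  rw [intervalIntegral.integral_smul] at h2
  have h4 : (∫ θ in (0:ℝ)..2 * π, F (circleMap 0 r θ)) = (2 * π : ℝ) • F 0 := by
    have := congrArg (fun z => Complex.I⁻¹ • z) h2
    simpa [smul_smul, inv_mul_cancel_left₀ Complex.I_ne_zero, mul_comm, mul_left_comm,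
      Complex.ext_iff, Complex.I_ne_zero] using this
  have hper : Function.Periodic (fun θ => F (circleMap 0 r θ)) (2 * π) :=
    fun θ => by simp [(periodic_circleMap 0 r) θ]
  have h5 := hper.intervalIntegral_add_eq (-π) 0
  rw [zero_add] at h5
  rw [← h4, ← h5]
  rw [show -π + 2*π = π by ring]



theorem my_submean (F : ℂ → ℂ) (hF : Differentiable ℂ F) {r : ℝ} (hr : 0 < r) :
    ENNReal.ofReal (2 * π) * (‖F 0‖₊ : ℝ≥0∞) ^ 2 ≤
      ∫⁻ θ in Ioo (-π) π, (‖F (circleMap 0 r θ)‖₊ : ℝ≥0∞) ^ 2 := by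
  -- real-valued submean inequality via F², then transfer
  have hmv := my_meanvalue (fun z => F z * F z) (hF.mul hF) hr
  have hle : 2 * π * ‖F 0‖ ^ 2 ≤ ∫ θ in (-π)..π, ‖F (circleMap 0 r θ)‖ ^ 2 := by
    have h1 : ‖(2 * π : ℝ) • (F 0 * F 0)‖ = 2 * π * ‖F 0‖ ^ 2 := by
      rw [norm_smul, norm_mul]
      simp [abs_of_pos Real.two_pi_pos, sq]
      exact Or.inl Real.pi_pos.le
    calc 2 * π * ‖F 0‖ ^ 2 = ‖∫ θ in (-π)..π, F (circleMap 0 r θ) * F (circleMap 0 r θ)‖ := by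
          rw [hmv, h1]
      _ ≤ ∫ θ in (-π)..π, ‖F (circleMap 0 r θ) * F (circleMap 0 r θ)‖ := by
          exact intervalIntegral.norm_integral_le_integral_norm (by linarith [Real.pi_pos])
      _ = ∫ θ in (-π)..π, ‖F (circleMap 0 r θ)‖ ^ 2 := by
          congr 1; funext θ; rw [norm_mul, sq]
  have hcont : Continuous fun θ => ‖F (circleMap 0 r θ)‖ ^ 2 :=
    ((hF.continuous.comp (continuous_circleMap 0 r)).norm.pow 2)
  have hpi : (-π : ℝ) ≤ π := by linarith [Real.pi_pos]
  have hint : IntegrableOn (fun θ => ‖F (circleMap 0 r θ)‖ ^ 2) (Ioc (-π) π) :=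
    by rw [← intervalIntegrable_iff_integrableOn_Ioc_of_le hpi]; exact hcont.intervalIntegrable (-π) π
  have heq : ENNReal.ofReal (∫ θ in (-π)..π, ‖F (circleMap 0 r θ)‖ ^ 2) =
      ∫⁻ θ in Ioc (-π) π, ENNReal.ofReal (‖F (circleMap 0 r θ)‖ ^ 2) := by
    rw [intervalIntegral.integral_of_le hpi]
    exact ofReal_integral_eq_lintegral_ofReal hint
      (Filter.Eventually.of_forall fun θ => by positivity)
  have hIoo : (∫⁻ θ in Ioc (-π) π, ENNReal.ofReal (‖F (circleMap 0 r θ)‖ ^ 2)) =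
      ∫⁻ θ in Ioo (-π) π, ENNReal.ofReal (‖F (circleMap 0 r θ)‖ ^ 2) := by
    rw [Measure.restrict_congr_set Ioo_ae_eq_Ioc.symm]
  have hpt : ∀ θ : ℝ, ENNReal.ofReal (‖F (circleMap 0 r θ)‖ ^ 2) =
      (‖F (circleMap 0 r θ)‖₊ : ℝ≥0∞) ^ 2 := by
    intro θ
    rw [ENNReal.ofReal_pow (norm_nonneg _), ofReal_norm, enorm_eq_nnnorm]
  calc ENNReal.ofReal (2 * π) * (‖F 0‖₊ : ℝ≥0∞) ^ 2
      = ENNReal.ofReal (2 * π * ‖F 0‖ ^ 2) := by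
        rw [ENNReal.ofReal_mul Real.two_pi_pos.le,
          ENNReal.ofReal_pow (norm_nonneg _), ofReal_norm, enorm_eq_nnnorm]
    _ ≤ ENNReal.ofReal (∫ θ in (-π)..π, ‖F (circleMap 0 r θ)‖ ^ 2) := ENNReal.ofReal_le_ofReal hle
    _ = ∫⁻ θ in Ioo (-π) π, (‖F (circleMap 0 r θ)‖₊ : ℝ≥0∞) ^ 2 := by
        rw [heq, hIoo]
        exact lintegral_congr fun θ => hpt θ



theorem my_radial {a : ℝ} (ha : 0 < a) :
    ∫⁻ r in Ioi (0:ℝ), ENNReal.ofReal (r * Real.exp (-(a * r ^ 2))) =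
      ENNReal.ofReal ((2 * a)⁻¹) := by
  have hint : Integrable (fun r : ℝ => r * Real.exp (-(a * r ^ 2))) := by
    have := integrable_rpow_mul_exp_neg_mul_sq ha (by norm_num : (-1:ℝ) < 1)
    simpa [Real.rpow_one, neg_mul] using this
  have hval : ∫ r in Ioi (0:ℝ), r * Real.exp (-(a * r ^ 2)) = (2 * a)⁻¹ := by
    have hderiv : ∀ r ∈ Ici (0:ℝ),
        HasDerivAt (fun r => -(2 * a)⁻¹ * Real.exp (-(a * r ^ 2)))
          (r * Real.exp (-(a * r ^ 2))) r := by
      intro r _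
      have h1 : HasDerivAt (fun r : ℝ => -(a * r ^ 2)) (-(2 * a * r)) r := by
        have := ((hasDerivAt_pow 2 r).const_mul a).neg
        exact this.congr_deriv (by simp; ring)
      have h2 := (h1.exp).const_mul (-(2 * a)⁻¹)
      exact h2.congr_deriv (by field_simp)
    have htend : Filter.Tendsto (fun r : ℝ => -(2 * a)⁻¹ * Real.exp (-(a * r ^ 2)))
        Filter.atTop (nhds 0) := by
      have h3 : Filter.Tendsto (fun r : ℝ => a * r ^ 2) Filter.atTop Filter.atTop :=
        (Filter.tendsto_pow_atTop two_ne_zero).const_mul_atTop ha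
      have h4 : Filter.Tendsto (fun r : ℝ => Real.exp (-(a * r ^ 2))) Filter.atTop (nhds 0) :=
        Real.tendsto_exp_atBot.comp (Filter.tendsto_neg_atTop_atBot.comp h3)
      simpa using h4.const_mul (-(2 * a)⁻¹)
    have := integral_Ioi_of_hasDerivAt_of_tendsto' hderiv hint.integrableOn htend
    rw [this]
    simp
  rw [← hval]
  rw [← ofReal_integral_eq_lintegral_ofReal hint.integrableOn]
  exact (ae_restrict_iff' measurableSet_Ioi).mpr
    (Filter.Eventually.of_forall fun r hr => by have h0 : (0:ℝ) < r := hr; positivity)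

theorem my_fock_one (F : ℂ → ℂ) (hF : Differentiable ℂ F) {a : ℝ} (ha : 0 < a) :
    ENNReal.ofReal π * (‖F 0‖₊ : ℝ≥0∞) ^ 2 ≤
      ENNReal.ofReal a *
        ∫⁻ z : ℂ, (‖F z‖₊ : ℝ≥0∞) ^ 2 * ENNReal.ofReal (Real.exp (-(a * ‖z‖ ^ 2))) := by
  set C : ℝ≥0∞ := (‖F 0‖₊ : ℝ≥0∞) ^ 2 with hC
  set g : ℂ → ℝ≥0∞ := fun z => (‖F z‖₊ : ℝ≥0∞) ^ 2 * ENNReal.ofReal (Real.exp (-(a * ‖z‖ ^ 2)))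
    with hgdef
  have hFc : Continuous F := hF.continuous
  have hg : Measurable g := by fun_prop
  have hsymm : ∀ p : ℝ × ℝ, Complex.polarCoord.symm p = circleMap 0 p.1 p.2 := by
    intro p
    simp [circleMap, Complex.exp_mul_I, ← Complex.ofReal_cos, ← Complex.ofReal_sin]
  have hnorm : ∀ p : ℝ × ℝ, 0 < p.1 → ‖Complex.polarCoord.symm p‖ ^ 2 = p.1 ^ 2 := by
    intro p hp
    rw [Complex.norm_polarCoord_symm, sq_abs]
  -- polar coordinates
  have step1 : ∫⁻ z, g z = ∫⁻ p in Ioi (0:ℝ) ×ˢ Ioo (-π) π,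
      ENNReal.ofReal p.1 * ((‖F (circleMap 0 p.1 p.2)‖₊ : ℝ≥0∞) ^ 2 *
        ENNReal.ofReal (Real.exp (-(a * p.1 ^ 2)))) := by
    rw [my_lintegral_polar g hg, polarCoord_target]
    refine setLIntegral_congr_fun (measurableSet_Ioi.prod measurableSet_Ioo) ?_
    refine fun p hp => ?_
    rw [hgdef]
    simp only
    rw [hnorm p hp.1, hsymm p]
  -- Fubini
  have hmeas2 : Measurable fun p : ℝ × ℝ =>
      ENNReal.ofReal p.1 * ((‖F (circleMap 0 p.1 p.2)‖₊ : ℝ≥0∞) ^ 2 *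
        ENNReal.ofReal (Real.exp (-(a * p.1 ^ 2)))) := by
    have : Continuous fun p : ℝ × ℝ => circleMap 0 p.1 p.2 := by
      simp only [circleMap]
      fun_prop
    fun_prop
  have step2 : ∫⁻ p in Ioi (0:ℝ) ×ˢ Ioo (-π) π,
      ENNReal.ofReal p.1 * ((‖F (circleMap 0 p.1 p.2)‖₊ : ℝ≥0∞) ^ 2 *
        ENNReal.ofReal (Real.exp (-(a * p.1 ^ 2)))) =
      ∫⁻ r in Ioi (0:ℝ), ∫⁻ θ in Ioo (-π) π,
        ENNReal.ofReal r * ((‖F (circleMap 0 r θ)‖₊ : ℝ≥0∞) ^ 2 *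
          ENNReal.ofReal (Real.exp (-(a * r ^ 2)))) := by
    rw [Measure.volume_eq_prod, ← Measure.prod_restrict]
    exact lintegral_prod _ hmeas2.aemeasurable
  -- lower bound on inner integral
  have step3 : ∀ r : ℝ, 0 < r →
      (ENNReal.ofReal (2 * π) * C) * ENNReal.ofReal (r * Real.exp (-(a * r ^ 2))) ≤
      ∫⁻ θ in Ioo (-π) π,
        ENNReal.ofReal r * ((‖F (circleMap 0 r θ)‖₊ : ℝ≥0∞) ^ 2 *
          ENNReal.ofReal (Real.exp (-(a * r ^ 2)))) := by
    intro r hr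
    have hre : ∀ θ : ℝ, ENNReal.ofReal r * ((‖F (circleMap 0 r θ)‖₊ : ℝ≥0∞) ^ 2 *
          ENNReal.ofReal (Real.exp (-(a * r ^ 2)))) =
        (ENNReal.ofReal (r * Real.exp (-(a * r ^ 2)))) *
          (‖F (circleMap 0 r θ)‖₊ : ℝ≥0∞) ^ 2 := by
      intro θ
      rw [ENNReal.ofReal_mul hr.le]
      ring
    simp only [hre]
    rw [lintegral_const_mul' _ _ ENNReal.ofReal_ne_top]
    calc (ENNReal.ofReal (2 * π) * C) * ENNReal.ofReal (r * Real.exp (-(a * r ^ 2)))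
        = ENNReal.ofReal (r * Real.exp (-(a * r ^ 2))) * (ENNReal.ofReal (2 * π) * C) := by ring
      _ ≤ _ := mul_le_mul_right (my_submean F hF hr) _
  -- put together
  have step4 : (ENNReal.ofReal (2 * π) * C) * ENNReal.ofReal ((2 * a)⁻¹) ≤ ∫⁻ z, g z := by
    rw [step1, step2, ← my_radial ha, ← lintegral_const_mul' _ _
      (ENNReal.mul_ne_top ENNReal.ofReal_ne_top (by simp [hC]))]
    refine lintegral_mono_ae ?_
    filter_upwards [ae_restrict_mem measurableSet_Ioi] with r hr
    exact step3 r hr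
  calc ENNReal.ofReal π * C = ENNReal.ofReal a * ((ENNReal.ofReal (2 * π) * C) *
        ENNReal.ofReal ((2 * a)⁻¹)) := by
        have hre : ENNReal.ofReal a * (ENNReal.ofReal (2*π) * C * ENNReal.ofReal (2*a)⁻¹) =
            (ENNReal.ofReal a * ENNReal.ofReal (2*π) * ENNReal.ofReal (2*a)⁻¹) * C := by ring
        rw [hre, ← ENNReal.ofReal_mul ha.le, ← ENNReal.ofReal_mul (by positivity),
          show a * (2*π) * (2*a)⁻¹ = π by field_simp]
    _ ≤ ENNReal.ofReal a * ∫⁻ z, g z := mul_le_mul_right step4 _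



theorem my_fock (n : ℕ) : ∀ (a : Fin n → ℝ), (∀ j, 0 < a j) →
    ∀ (G : (Fin n → ℂ) → ℂ), Differentiable ℂ G →
    ENNReal.ofReal π ^ n * (‖G 0‖₊ : ℝ≥0∞) ^ 2 ≤
      (∏ j, ENNReal.ofReal (a j)) *
        ∫⁻ z : Fin n → ℂ, (‖G z‖₊ : ℝ≥0∞) ^ 2 *
          ENNReal.ofReal (Real.exp (-(∑ j, a j * ‖z j‖ ^ 2))) := by
  induction n with
  | zero =>
    intro a _ G _
    have hvol : (volume : Measure (Fin 0 → ℂ)) univ = 1 := by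
      rw [MeasureTheory.volume_pi, Measure.pi_univ]
      simp
    rw [lintegral_unique, hvol, mul_one]
    simp only [Finset.univ_eq_empty, Finset.sum_empty, neg_zero, Real.exp_zero,
      ENNReal.ofReal_one, mul_one, Finset.prod_empty, one_mul, pow_zero]
    have hd : (0 : Fin 0 → ℂ) = default := Subsingleton.elim _ _
    rw [hd]
    exact le_of_eq (congrArg (fun w => ((‖G w‖₊ : ℝ≥0∞) ^ 2)) (Subsingleton.elim _ _))
  | succ n ih =>
    intro a ha G hG
    set G' : (Fin n → ℂ) → ℂ := fun y => G (Fin.cons 0 y) with hG'def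
    have hGc : Continuous G := hG.continuous
    -- differentiability of the slice maps
    have hcons : ∀ y : Fin n → ℂ, Differentiable ℂ (fun x : ℂ => (Fin.cons x y : Fin (n+1) → ℂ)) := by
      intro y
      have heq : (fun x : ℂ => (Fin.cons x y : Fin (n+1) → ℂ)) =
          fun x => (Pi.single (0 : Fin (n+1)) x : Fin (n+1) → ℂ) +
            (Fin.cons 0 y : Fin (n+1) → ℂ) := by
        funext x j
        cases j using Fin.cases with
        | zero => simp
        | succ k => simp [Pi.single_eq_of_ne (Fin.succ_ne_zero k)]
      rw [heq]
      exact fun x => ((hasFDerivAt_single (𝕜 := ℂ) (E := fun _ : Fin (n+1) => ℂ)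
        (i := 0) x).differentiableAt.add_const _)
    have hcons2 : Differentiable ℂ (fun y : Fin n → ℂ => (Fin.cons 0 y : Fin (n+1) → ℂ)) := by
      set L : (Fin n → ℂ) →L[ℂ] (Fin (n+1) → ℂ) :=
        ContinuousLinearMap.pi (fun j : Fin (n+1) =>
          Fin.cases (motive := fun _ => (Fin n → ℂ) →L[ℂ] ℂ) 0
            (fun k => ContinuousLinearMap.proj k) j) with hL
      have heq : (fun y : Fin n → ℂ => (Fin.cons 0 y : Fin (n+1) → ℂ)) = L := by
        funext y j
        cases j using Fin.cases with
        | zero => simp [hL]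
        | succ k => simp [hL]
      rw [heq]
      exact L.differentiable
    have hG' : Differentiable ℂ G' := hG.comp hcons2
    -- measure-theoretic decomposition
    have hmp := MeasureTheory.volume_preserving_piFinSuccAbove (fun _ : Fin (n+1) => ℂ) 0
    set h : (Fin (n+1) → ℂ) → ℝ≥0∞ := fun z => (‖G z‖₊ : ℝ≥0∞) ^ 2 *
      ENNReal.ofReal (Real.exp (-(∑ j, a j * ‖z j‖ ^ 2))) with hhdef
    have hh : Measurable h := by fun_prop
    have key : ∫⁻ z, h z = ∫⁻ p : ℂ × (Fin n → ℂ), h (Fin.cons p.1 p.2) := by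
      set e := MeasurableEquiv.piFinSuccAbove (fun _ : Fin (n+1) => ℂ) 0 with he
      calc ∫⁻ z, h z = ∫⁻ z, (h ∘ e.symm) (e z) := by
            refine lintegral_congr fun z => ?_
            simp only [Function.comp_apply, MeasurableEquiv.symm_apply_apply]
        _ = ∫⁻ p, (h ∘ e.symm) p := hmp.lintegral_comp (hh.comp e.symm.measurable)
        _ = ∫⁻ p : ℂ × (Fin n → ℂ), h (Fin.cons p.1 p.2) := by
            refine lintegral_congr fun p => ?_
            have : e.symm p = Fin.cons p.1 p.2 := by
              rw [he]
              simp [MeasurableEquiv.piFinSuccAbove, Fin.insertNth_zero', Fin.consEquiv]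
            rw [Function.comp_apply, this]
    have hsum : ∀ (x : ℂ) (y : Fin n → ℂ),
        ∑ j : Fin (n+1), a j * ‖(Fin.cons x y : Fin (n+1) → ℂ) j‖ ^ 2 =
          a 0 * ‖x‖ ^ 2 + ∑ j : Fin n, a j.succ * ‖y j‖ ^ 2 := by
      intro x y
      rw [Fin.sum_univ_succ]
      simp
    have hsplit : ∀ (x : ℂ) (y : Fin n → ℂ), h (Fin.cons x y) =
        ((‖G (Fin.cons x y)‖₊ : ℝ≥0∞) ^ 2 * ENNReal.ofReal (Real.exp (-(a 0 * ‖x‖ ^ 2)))) *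
          ENNReal.ofReal (Real.exp (-(∑ j : Fin n, a j.succ * ‖y j‖ ^ 2))) := by
      intro x y
      rw [hhdef]
      simp only
      rw [hsum, neg_add, Real.exp_add, ENNReal.ofReal_mul (Real.exp_pos _).le, mul_assoc]
    have key2 : ∫⁻ p : ℂ × (Fin n → ℂ), h (Fin.cons p.1 p.2) =
        ∫⁻ y : Fin n → ℂ, ∫⁻ x : ℂ, h (Fin.cons x y) := by
      rw [Measure.volume_eq_prod]
      refine lintegral_prod_symm _ ?_
      have : Measurable fun p : ℂ × (Fin n → ℂ) => (Fin.cons p.1 p.2 : Fin (n+1) → ℂ) := by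
        refine measurable_pi_iff.mpr fun j => ?_
        cases j using Fin.cases
        · simpa using measurable_fst
        · simp; exact measurable_snd.eval
      exact (hh.comp this).aemeasurable
    -- inner bound
    have hinner : ∀ y : Fin n → ℂ,
        ENNReal.ofReal π * ((‖G' y‖₊ : ℝ≥0∞) ^ 2 *
            ENNReal.ofReal (Real.exp (-(∑ j : Fin n, a j.succ * ‖y j‖ ^ 2)))) ≤
          ENNReal.ofReal (a 0) * ∫⁻ x : ℂ, h (Fin.cons x y) := by
      intro y
      have hfo := my_fock_one (fun x => G (Fin.cons x y)) (hG.comp (hcons y)) (ha 0)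
      calc ENNReal.ofReal π * ((‖G' y‖₊ : ℝ≥0∞) ^ 2 *
            ENNReal.ofReal (Real.exp (-(∑ j : Fin n, a j.succ * ‖y j‖ ^ 2))))
          = (ENNReal.ofReal π * (‖G (Fin.cons 0 y)‖₊ : ℝ≥0∞) ^ 2) *
            ENNReal.ofReal (Real.exp (-(∑ j : Fin n, a j.succ * ‖y j‖ ^ 2))) := by
            rw [hG'def]; ring
        _ ≤ (ENNReal.ofReal (a 0) *
              ∫⁻ x : ℂ, (‖G (Fin.cons x y)‖₊ : ℝ≥0∞) ^ 2 *
                ENNReal.ofReal (Real.exp (-(a 0 * ‖x‖ ^ 2)))) *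
            ENNReal.ofReal (Real.exp (-(∑ j : Fin n, a j.succ * ‖y j‖ ^ 2))) :=
            mul_le_mul_left hfo _
        _ = ENNReal.ofReal (a 0) * ∫⁻ x : ℂ, h (Fin.cons x y) := by
            rw [mul_assoc]
            congr 1
            rw [← lintegral_mul_const' _ _ ENNReal.ofReal_ne_top]
            congr 1
            funext x
            rw [hsplit]
    -- conclude
    have hmain : ENNReal.ofReal π * (∫⁻ y : Fin n → ℂ, (‖G' y‖₊ : ℝ≥0∞) ^ 2 *
          ENNReal.ofReal (Real.exp (-(∑ j : Fin n, a j.succ * ‖y j‖ ^ 2)))) ≤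
        ENNReal.ofReal (a 0) * ∫⁻ z, h z := by
      rw [key, key2, ← lintegral_const_mul' (ENNReal.ofReal (a 0)) _ ENNReal.ofReal_ne_top,
        ← lintegral_const_mul' (ENNReal.ofReal π) _ ENNReal.ofReal_ne_top]
      exact lintegral_mono fun y => hinner y
    have hih := ih (fun j => a j.succ) (fun j => ha j.succ) G' hG'
    have hG'0 : G' 0 = G 0 := by
      have hc0 : (Fin.cons 0 (0 : Fin n → ℂ) : Fin (n+1) → ℂ) = 0 := by
        funext j
        cases j using Fin.cases <;> simp
      show G (Fin.cons 0 0) = G 0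
      rw [hc0]
    calc ENNReal.ofReal π ^ (n+1) * (‖G 0‖₊ : ℝ≥0∞) ^ 2
        = ENNReal.ofReal π * (ENNReal.ofReal π ^ n * (‖G' 0‖₊ : ℝ≥0∞) ^ 2) := by
          rw [hG'0]; ring
      _ ≤ ENNReal.ofReal π * ((∏ j : Fin n, ENNReal.ofReal (a j.succ)) *
            ∫⁻ y : Fin n → ℂ, (‖G' y‖₊ : ℝ≥0∞) ^ 2 *
              ENNReal.ofReal (Real.exp (-(∑ j : Fin n, a j.succ * ‖y j‖ ^ 2)))) :=
          mul_le_mul_right hih _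
      _ = (∏ j : Fin n, ENNReal.ofReal (a j.succ)) *
            (ENNReal.ofReal π * ∫⁻ y : Fin n → ℂ, (‖G' y‖₊ : ℝ≥0∞) ^ 2 *
              ENNReal.ofReal (Real.exp (-(∑ j : Fin n, a j.succ * ‖y j‖ ^ 2)))) := by ring
      _ ≤ (∏ j : Fin n, ENNReal.ofReal (a j.succ)) *
            (ENNReal.ofReal (a 0) * ∫⁻ z, h z) := mul_le_mul_right hmain _
      _ = (∏ j : Fin (n+1), ENNReal.ofReal (a j)) * ∫⁻ z, h z := by
            rw [Fin.prod_univ_succ]; ring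



theorem my_diff_of_wbar {n : ℕ} {g : (Fin n → ℂ) → ℂ} (hg : Differentiable ℝ g)
    (h : ∀ j a, wderivBar j g a = 0) : Differentiable ℂ g := by
  intro z
  have hD := (hg z).hasFDerivAt
  set D := fderiv ℝ g z with hDdef
  have hI : ∀ j, D (Pi.single j Complex.I) = Complex.I * D (Pi.single j 1) := by
    intro j
    have h0 := h j z
    rw [wderivBar] at h0
    rw [mul_eq_zero] at h0
    have h2 : D (Pi.single j 1) + Complex.I * D (Pi.single j Complex.I) = 0 := by
      rcases h0 with h0 | h0
      · norm_num at h0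
      · exact h0
    have h3 : Complex.I * D (Pi.single j Complex.I) = -D (Pi.single j 1) := by
      linear_combination h2
    have h4 := congrArg (fun w => Complex.I * w) h3
    rw [← mul_assoc, Complex.I_mul_I] at h4
    linear_combination (-1 : ℂ) * h4
  let L : (Fin n → ℂ) →ₗ[ℂ] ℂ :=
    { toFun := fun v => ∑ j, v j * D (Pi.single j 1)
      map_add' := by
        intro u v
        simp only [Pi.add_apply, add_mul]
        rw [Finset.sum_add_distrib]
      map_smul' := by
        intro c v
        simp only [Pi.smul_apply, smul_eq_mul, RingHom.id_apply, Finset.mul_sum]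
        exact Finset.sum_congr rfl fun j _ => by ring }
  have hLD : ∀ v, D v = L v := by
    intro v
    conv_lhs => rw [show v = ∑ j, Pi.single j (v j) from (Finset.univ_sum_single v).symm]
    rw [map_sum]
    show _ = ∑ j, v j * D (Pi.single j 1)
    refine Finset.sum_congr rfl fun j _ => ?_
    have hdecomp : (Pi.single j (v j) : Fin n → ℂ) =
        (v j).re • (Pi.single j (1:ℂ) : Fin n → ℂ) +
          (v j).im • (Pi.single j Complex.I : Fin n → ℂ) := by
      funext k
      by_cases hk : k = j
      · subst hk
        simp [Complex.real_smul, Complex.re_add_im]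
      · simp [Pi.single_eq_of_ne hk]
    rw [hdecomp, map_add, D.map_smul, D.map_smul, hI j]
    show (v j).re • D (Pi.single j 1) + (v j).im • (Complex.I * D (Pi.single j 1)) = _
    rw [Complex.real_smul, Complex.real_smul]
    linear_combination D (Pi.single j (1:ℂ)) * (Complex.re_add_im (v j))
  have hfd : HasFDerivAt g (LinearMap.toContinuousLinearMap L) z := by
    refine hasFDerivAt_of_restrictScalars ℝ hD ?_
    ext v
    exact (hLD v).symm
  exact hfd.differentiableAt



noncomputable def Tmap {n : ℕ} (I : Finset (Fin n)) : (Fin n → ℂ) →L[ℝ] (Fin n → ℂ) :=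
  ContinuousLinearMap.pi fun j =>
    if j ∈ I then Complex.conjCLE.toContinuousLinearMap.comp (ContinuousLinearMap.proj j)
    else ContinuousLinearMap.proj j

theorem Tmap_apply {n : ℕ} (I : Finset (Fin n)) (z : Fin n → ℂ) (j : Fin n) :
    Tmap I z j = if j ∈ I then (starRingEnd ℂ) (z j) else z j := by
  simp only [Tmap, ContinuousLinearMap.pi_apply]
  rw [apply_ite (fun (L : (Fin n → ℂ) →L[ℝ] ℂ) => L z)]
  simp

theorem Tmap_single_one {n : ℕ} (I : Finset (Fin n)) (k : Fin n) :
    Tmap I (Pi.single k 1) = Pi.single k 1 := by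
  funext j
  rw [Tmap_apply]
  by_cases hj : j = k
  · subst hj; simp
  · simp [Pi.single_eq_of_ne hj]

theorem Tmap_single_I_mem {n : ℕ} {I : Finset (Fin n)} {k : Fin n} (hk : k ∈ I) :
    Tmap I (Pi.single k Complex.I) = -(Pi.single k Complex.I : Fin n → ℂ) := by
  funext j
  rw [Tmap_apply]
  by_cases hj : j = k
  · subst hj; simp [hk, Complex.conj_I]
  · simp [Pi.single_eq_of_ne hj]

theorem Tmap_single_I_not_mem {n : ℕ} {I : Finset (Fin n)} {k : Fin n} (hk : k ∉ I) :
    Tmap I (Pi.single k Complex.I) = (Pi.single k Complex.I : Fin n → ℂ) := by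
  funext j
  rw [Tmap_apply]
  by_cases hj : j = k
  · subst hj; simp [hk]
  · simp [Pi.single_eq_of_ne hj]

theorem Tmap_invol {n : ℕ} (I : Finset (Fin n)) (z : Fin n → ℂ) :
    Tmap I (Tmap I z) = z := by
  funext j
  rw [Tmap_apply, Tmap_apply]
  by_cases hj : j ∈ I <;> simp [hj]

noncomputable def psiFun {n : ℕ} (lam : Fin n → ℝ) (I : Finset (Fin n))
    (z : Fin n → ℂ) : ℝ :=
  -∑ j ∈ I, lam j * ‖z j‖ ^ 2

noncomputable def psiD {n : ℕ} (lam : Fin n → ℝ) (I : Finset (Fin n))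
    (z : Fin n → ℂ) : (Fin n → ℂ) →L[ℝ] ℝ :=
  -∑ j ∈ I, lam j •
    ((2 * (z j).re) • (Complex.reCLM.comp (ContinuousLinearMap.proj j)) +
      (2 * (z j).im) • (Complex.imCLM.comp (ContinuousLinearMap.proj j)))

theorem hasFDerivAt_psiFun {n : ℕ} (lam : Fin n → ℝ) (I : Finset (Fin n))
    (z : Fin n → ℂ) : HasFDerivAt (psiFun lam I) (psiD lam I z) z := by
  have hterm : ∀ j : Fin n, HasFDerivAt (fun w : Fin n → ℂ => lam j * ‖w j‖ ^ 2)
      (lam j • ((2 * (z j).re) • (Complex.reCLM.comp (ContinuousLinearMap.proj j)) +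
        (2 * (z j).im) • (Complex.imCLM.comp (ContinuousLinearMap.proj j)))) z := by
    intro j
    set Rj : (Fin n → ℂ) →L[ℝ] ℝ := Complex.reCLM.comp (ContinuousLinearMap.proj j) with hRj
    set Ij : (Fin n → ℂ) →L[ℝ] ℝ := Complex.imCLM.comp (ContinuousLinearMap.proj j) with hIj
    have hre : HasFDerivAt (fun w : Fin n → ℂ => (w j).re) Rj z := Rj.hasFDerivAt
    have him : HasFDerivAt (fun w : Fin n → ℂ => (w j).im) Ij z := Ij.hasFDerivAt
    have hsq := ((hre.mul hre).add (him.mul him)).const_mul (lam j)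
    have hfun : (fun w : Fin n → ℂ => lam j * ((w j).re * (w j).re + (w j).im * (w j).im)) =
        (fun w : Fin n → ℂ => lam j * ‖w j‖ ^ 2) := by
      funext w
      rw [show ‖w j‖ ^ 2 = Complex.normSq (w j) from Complex.sq_norm (w j), Complex.normSq_apply]
    rw [← hfun]
    refine hsq.congr_fderiv ?_
    ext v
    simp only [ContinuousLinearMap.smul_apply, ContinuousLinearMap.add_apply, hRj, hIj,
      ContinuousLinearMap.coe_comp', Function.comp_apply, ContinuousLinearMap.proj_apply,
      smul_eq_mul]
    ring
  have hsum : HasFDerivAt (fun w : Fin n → ℂ => ∑ j ∈ I, lam j * ‖w j‖ ^ 2)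
      (∑ j ∈ I, lam j •
        ((2 * (z j).re) • (Complex.reCLM.comp (ContinuousLinearMap.proj j)) +
          (2 * (z j).im) • (Complex.imCLM.comp (ContinuousLinearMap.proj j)))) z :=
    HasFDerivAt.fun_sum fun j _ => hterm j
  exact hsum.neg

theorem psiD_single_one {n : ℕ} (lam : Fin n → ℝ) (I : Finset (Fin n))
    (z : Fin n → ℂ) (k : Fin n) :
    psiD lam I z (Pi.single k 1) = if k ∈ I then -(2 * lam k * (z k).re) else 0 := by
  simp only [psiD, ContinuousLinearMap.neg_apply, ContinuousLinearMap.sum_apply,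
    ContinuousLinearMap.smul_apply, ContinuousLinearMap.add_apply,
    ContinuousLinearMap.coe_comp', Function.comp_apply, ContinuousLinearMap.proj_apply,
    Complex.reCLM_apply, Complex.imCLM_apply, smul_eq_mul]
  have hterm : ∀ j ∈ I, lam j * (2 * (z j).re * ((Pi.single k 1 : Fin n → ℂ) j).re +
      2 * (z j).im * ((Pi.single k 1 : Fin n → ℂ) j).im) =
      if j = k then 2 * lam k * (z k).re else 0 := by
    intro j _
    by_cases hj : j = k
    · subst hj; simp; ring
    · simp [Pi.single_eq_of_ne hj, hj]
  rw [Finset.sum_congr rfl hterm, Finset.sum_ite_eq' I k fun _ => 2 * lam k * (z k).re]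
  by_cases hk : k ∈ I <;> simp [hk]

theorem psiD_single_I {n : ℕ} (lam : Fin n → ℝ) (I : Finset (Fin n))
    (z : Fin n → ℂ) (k : Fin n) :
    psiD lam I z (Pi.single k Complex.I) = if k ∈ I then -(2 * lam k * (z k).im) else 0 := by
  simp only [psiD, ContinuousLinearMap.neg_apply, ContinuousLinearMap.sum_apply,
    ContinuousLinearMap.smul_apply, ContinuousLinearMap.add_apply,
    ContinuousLinearMap.coe_comp', Function.comp_apply, ContinuousLinearMap.proj_apply,
    Complex.reCLM_apply, Complex.imCLM_apply, smul_eq_mul]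
  have hterm : ∀ j ∈ I, lam j * (2 * (z j).re * ((Pi.single k Complex.I : Fin n → ℂ) j).re +
      2 * (z j).im * ((Pi.single k Complex.I : Fin n → ℂ) j).im) =
      if j = k then 2 * lam k * (z k).im else 0 := by
    intro j _
    by_cases hj : j = k
    · subst hj; simp; ring
    · simp [Pi.single_eq_of_ne hj, hj]
  rw [Finset.sum_congr rfl hterm, Finset.sum_ite_eq' I k fun _ => 2 * lam k * (z k).im]
  by_cases hk : k ∈ I <;> simp [hk]



noncomputable def Gfun {n : ℕ} (lam : Fin n → ℝ) (I : Finset (Fin n))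
    (f : (Fin n → ℂ) → ℂ) : (Fin n → ℂ) → ℂ :=
  fun z => f (Tmap I z) * Complex.exp ((psiFun lam I z : ℝ) : ℂ)

theorem hasFDerivAt_Gfun {n : ℕ} (lam : Fin n → ℝ) (I : Finset (Fin n))
    (f : (Fin n → ℂ) → ℂ) (hf : ContDiff ℝ (⊤ : ℕ∞) f) (z : Fin n → ℂ) :
    HasFDerivAt (Gfun lam I f)
      (f (Tmap I z) • (Complex.exp ((psiFun lam I z : ℝ) : ℂ) •
          (Complex.ofRealCLM.comp (psiD lam I z))) +
        Complex.exp ((psiFun lam I z : ℝ) : ℂ) •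
          ((fderiv ℝ f (Tmap I z)).comp (Tmap I))) z := by
  have hc : HasFDerivAt (fun z => f (Tmap I z)) ((fderiv ℝ f (Tmap I z)).comp (Tmap I)) z :=
    (hf.differentiable (by simp) (Tmap I z)).hasFDerivAt.comp z (Tmap I).hasFDerivAt
  have hd0 : HasFDerivAt (fun z => ((psiFun lam I z : ℝ) : ℂ))
      (Complex.ofRealCLM.comp (psiD lam I z)) z :=
    Complex.ofRealCLM.hasFDerivAt.comp z (hasFDerivAt_psiFun lam I z)
  have hd := hd0.cexp
  exact hc.mul hd

theorem wbar_Gfun {n : ℕ} (lam : Fin n → ℝ) (I : Finset (Fin n))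
    (f : (Fin n → ℂ) → ℂ) (hf : ContDiff ℝ (⊤ : ℕ∞) f) (hharm : ModelHarmonic lam I f)
    (k : Fin n) (z : Fin n → ℂ) : wderivBar k (Gfun lam I f) z = 0 := by
  have hG := hasFDerivAt_Gfun lam I f hf z
  rw [wderivBar, hG.fderiv]
  simp only [ContinuousLinearMap.add_apply, ContinuousLinearMap.smul_apply,
    ContinuousLinearMap.coe_comp', Function.comp_apply, Complex.ofRealCLM_apply,
    smul_eq_mul]
  rw [Tmap_single_one, psiD_single_one, psiD_single_I]
  by_cases hk : k ∈ I
  · rw [Tmap_single_I_mem hk, map_neg]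
    simp only [hk, if_true]
    have hadj := hharm.1 k hk (Tmap I z)
    rw [adjOp] at hadj
    have hw : wderiv k f (Tmap I z) =
        (lam k : ℂ) * (starRingEnd ℂ) (Tmap I z k) * f (Tmap I z) := by
      linear_combination -hadj
    rw [wderiv] at hw
    have hTk : (starRingEnd ℂ) (Tmap I z k) = z k := by
      rw [Tmap_apply]
      simp [hk]
    rw [hTk] at hw
    push_cast
    linear_combination Complex.exp ((psiFun lam I z : ℝ) : ℂ) * hw +
      (-(lam k : ℂ) * f (Tmap I z) * Complex.exp ((psiFun lam I z : ℝ) : ℂ)) *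
        (Complex.re_add_im (z k))
  · rw [Tmap_single_I_not_mem hk]
    simp only [hk, if_false]
    have hbar := hharm.2 k hk (Tmap I z)
    rw [wderivBar] at hbar
    push_cast
    linear_combination Complex.exp ((psiFun lam I z : ℝ) : ℂ) * hbar



theorem my_conj_mp : MeasurePreserving (fun z : ℂ => (starRingEnd ℂ) z) volume volume := by
  have h1 : MeasurePreserving (Prod.map (id : ℝ → ℝ) (Neg.neg : ℝ → ℝ)) volume volume := by
    rw [Measure.volume_eq_prod]
    exact (MeasurePreserving.id volume).prod (Measure.measurePreserving_neg volume)
  have h3 := Complex.volume_preserving_equiv_real_prod.symm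
  have h2 := (h3.comp h1).comp Complex.volume_preserving_equiv_real_prod
  have heq : (fun z : ℂ => (starRingEnd ℂ) z) =
      (Complex.measurableEquivRealProd.symm ∘ (Prod.map (id : ℝ → ℝ) (Neg.neg : ℝ → ℝ)) ∘
        Complex.measurableEquivRealProd) := by
    funext z
    simp only [Function.comp_apply, Complex.measurableEquivRealProd_apply, Prod.map,
      Complex.measurableEquivRealProd_symm_apply, id]
    apply Complex.ext <;> simp
  rw [heq]
  exact h2

theorem my_Tmap_mp {n : ℕ} (I : Finset (Fin n)) :
    MeasurePreserving (Tmap I) volume volume := by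
  have hcomp : ∀ j : Fin n, MeasurePreserving
      (fun w : ℂ => if j ∈ I then (starRingEnd ℂ) w else w) volume volume := by
    intro j
    by_cases hj : j ∈ I
    · simpa [hj] using my_conj_mp
    · simp only [hj, if_false]; exact MeasurePreserving.id (volume : Measure ℂ)
  have hpi := measurePreserving_pi (fun _ : Fin n => (volume : Measure ℂ))
    (fun _ => volume) hcomp
  have heq : (fun (a : Fin n → ℂ) (i : Fin n) =>
      if i ∈ I then (starRingEnd ℂ) (a i) else a i) = Tmap I := by
    funext a i
    rw [Tmap_apply]
  rw [← heq, MeasureTheory.volume_pi]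
  exact hpi


/-- The model extremal bound in the matched-signature case: if all `λ_j ≠ 0` and
`I = {j : λ_j < 0}`, then every smooth solution of the model harmonicity
equations satisfies `π^n |f(0)|² ≤ (∏ j, |λ_j|) ‖f‖²_{φ₀}` in `[0,∞]`. -/
theorem model_extremal_upper_bound (n : ℕ) (lam : Fin n → ℝ) (hlam : ∀ j, lam j ≠ 0)
    (I : Finset (Fin n)) (hI : I = Finset.univ.filter fun j => lam j < 0)
    (f : (Fin n → ℂ) → ℂ) (hf : ContDiff ℝ (⊤ : ℕ∞) f)
    (hharm : ModelHarmonic lam I f) :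
    ENNReal.ofReal Real.pi ^ n * (‖f 0‖₊ : ℝ≥0∞) ^ 2 ≤
      (∏ j : Fin n, ENNReal.ofReal |lam j|) * l2normSq lam f := by
  classical
  set G := Gfun lam I f with hGdef
  have hGd : Differentiable ℝ G := fun z => (hasFDerivAt_Gfun lam I f hf z).differentiableAt
  have hGC : Differentiable ℂ G :=
    my_diff_of_wbar hGd (fun k z => wbar_Gfun lam I f hf hharm k z)
  have hGcont : Continuous G := hGC.continuous
  have ha : ∀ j, 0 < |lam j| := fun j => abs_pos.mpr (hlam j)
  have hfock := my_fock n (fun j => |lam j|) ha G hGC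
  have hG0 : G 0 = f 0 := by
    rw [hGdef]
    unfold Gfun
    rw [map_zero]
    have hpsi0 : psiFun lam I (0 : Fin n → ℂ) = 0 := by simp [psiFun]
    rw [hpsi0]
    simp
  -- the exponent identity
  have hexp : ∀ z : Fin n → ℂ,
      2 * psiFun lam I z - ∑ j, |lam j| * ‖z j‖ ^ 2 = -(phi0 lam z) := by
    intro z
    rw [psiFun, phi0]
    have hIsum : ∑ j ∈ I, lam j * ‖z j‖ ^ 2 =
        ∑ j : Fin n, (if lam j < 0 then lam j * ‖z j‖ ^ 2 else 0) := by
      rw [hI]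
      exact Finset.sum_filter _ _
    rw [hIsum]
    have hper : ∀ j : Fin n, lam j * ‖z j‖ ^ 2 =
        2 * (if lam j < 0 then lam j * ‖z j‖ ^ 2 else 0) + |lam j| * ‖z j‖ ^ 2 := by
      intro j
      by_cases hj : lam j < 0
      · rw [if_pos hj, abs_of_neg hj]; ring
      · rw [if_neg hj, abs_of_nonneg (not_lt.1 hj)]; ring
    rw [Finset.sum_congr rfl fun j _ => hper j, Finset.sum_add_distrib, ← Finset.mul_sum]
    ring
  -- the integral identity
  have hInt : (∫⁻ z : Fin n → ℂ, (‖G z‖₊ : ℝ≥0∞) ^ 2 *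
      ENNReal.ofReal (Real.exp (-(∑ j, |lam j| * ‖z j‖ ^ 2)))) = l2normSq lam f := by
    have hΦm : Measurable fun z : Fin n → ℂ => (‖G z‖₊ : ℝ≥0∞) ^ 2 *
        ENNReal.ofReal (Real.exp (-(∑ j, |lam j| * ‖z j‖ ^ 2))) := by fun_prop
    calc (∫⁻ z : Fin n → ℂ, (‖G z‖₊ : ℝ≥0∞) ^ 2 *
        ENNReal.ofReal (Real.exp (-(∑ j, |lam j| * ‖z j‖ ^ 2))))
        = ∫⁻ z : Fin n → ℂ, (‖G (Tmap I z)‖₊ : ℝ≥0∞) ^ 2 *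
            ENNReal.ofReal (Real.exp (-(∑ j, |lam j| * ‖Tmap I z j‖ ^ 2))) :=
          ((my_Tmap_mp I).lintegral_comp hΦm).symm
      _ = l2normSq lam f := by
          rw [l2normSq]
          refine lintegral_congr fun z => ?_
          have hnormT : ∀ j, ‖Tmap I z j‖ = ‖z j‖ := by
            intro j
            rw [Tmap_apply]
            by_cases hj : j ∈ I <;> simp [hj]
          have hpsiT : psiFun lam I (Tmap I z) = psiFun lam I z := by
            rw [psiFun, psiFun]
            exact congrArg _ (Finset.sum_congr rfl fun j _ => by rw [hnormT j])
          have hGT : G (Tmap I z) = f z * Complex.exp ((psiFun lam I z : ℝ) : ℂ) := by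
            rw [hGdef]
            unfold Gfun
            rw [Tmap_invol, hpsiT]
          rw [hGT]
          have hnn : ∀ w : ℂ, ((‖w‖₊ : ℝ≥0∞)) = ENNReal.ofReal ‖w‖ :=
            fun w => (ofReal_norm w).symm
          rw [hnn, hnn, norm_mul]
          have hexpnorm : ‖Complex.exp ((psiFun lam I z : ℝ) : ℂ)‖ =
              Real.exp (psiFun lam I z) := by
            rw [show ‖Complex.exp ((psiFun lam I z : ℝ) : ℂ)‖ =
              ‖(Complex.exp ((psiFun lam I z : ℝ) : ℂ))‖ from rfl, Complex.norm_exp]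
            simp
          rw [hexpnorm]
          rw [Finset.sum_congr rfl fun j (_ : j ∈ Finset.univ) =>
            congrArg (fun t => |lam j| * t ^ 2) (hnormT j)]
          rw [← ENNReal.ofReal_pow (by positivity), ← ENNReal.ofReal_pow (norm_nonneg _),
            ← ENNReal.ofReal_mul (by positivity), ← ENNReal.ofReal_mul (by positivity)]
          have h2 : Real.exp (psiFun lam I z) ^ 2 *
              Real.exp (-(∑ j, |lam j| * ‖z j‖ ^ 2)) = Real.exp (-(phi0 lam z)) := by
            rw [sq, ← Real.exp_add, ← Real.exp_add, ← hexp z]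
            congr 1
            ring
          rw [mul_pow, mul_assoc, h2]
  calc ENNReal.ofReal Real.pi ^ n * (‖f 0‖₊ : ℝ≥0∞) ^ 2
      = ENNReal.ofReal Real.pi ^ n * (‖G 0‖₊ : ℝ≥0∞) ^ 2 := by rw [hG0]
    _ ≤ (∏ j : Fin n, ENNReal.ofReal |lam j|) *
          ∫⁻ z : Fin n → ℂ, (‖G z‖₊ : ℝ≥0∞) ^ 2 *
            ENNReal.ofReal (Real.exp (-(∑ j, |lam j| * ‖z j‖ ^ 2))) := hfock
    _ = (∏ j : Fin n, ENNReal.ofReal |lam j|) * l2normSq lam f := by rw [hInt]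
end

section
/- Let n be a natural number and λ : Fin n → ℝ with λ_j ≠ 0 for all j, and let I = {j : λ_j < 0}. Define g : ℂⁿ → ℂ by g(z) = exp(Σ_{j∈I} λ_j |z_j|²). Then g is smooth, g satisfies the model harmonicity equations for (I, λ), g(0) = 1, and ‖g‖²_{φ₀} = π^n / ∏_j |λ_j|. -/
open scoped ENNReal NNReal

section Aux

open MeasureTheory Real

private lemma key_fun (c : ℝ) (p : ℝ × ℝ) :
    Real.exp (-c * ‖Complex.measurableEquivRealProd.symm p‖ ^ 2)
      = Real.exp (-c * p.1 ^ 2) * Real.exp (-c * p.2 ^ 2) := by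
  rw [← Real.exp_add]
  congr 1
  have : ‖Complex.measurableEquivRealProd.symm p‖ ^ 2 = p.1 ^ 2 + p.2 ^ 2 := by
    rw [Complex.sq_norm, Complex.normSq_apply]
    simp [Complex.measurableEquivRealProd]
    ring
  rw [this]; ring

private lemma integrable_gauss_plane {c : ℝ} (hc : 0 < c) :
    Integrable fun w : ℂ => Real.exp (-c * ‖w‖ ^ 2) := by
  have h1 : Integrable fun x : ℝ => Real.exp (-c * x ^ 2) := integrable_exp_neg_mul_sq hc
  have h2 : Integrable fun p : ℝ × ℝ =>
      Real.exp (-c * p.1 ^ 2) * Real.exp (-c * p.2 ^ 2) := h1.mul_prod h1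
  have hmp := Complex.volume_preserving_equiv_real_prod
  rw [← (hmp.symm _).integrable_comp_emb (MeasurableEquiv.measurableEmbedding _)]
  exact h2.congr (Filter.Eventually.of_forall fun p => (key_fun c p).symm)

private lemma integral_gauss_plane {c : ℝ} (hc : 0 < c) :
    ∫ w : ℂ, Real.exp (-c * ‖w‖ ^ 2) = π / c := by
  have hmp := Complex.volume_preserving_equiv_real_prod
  rw [← (hmp.symm _).integral_comp (MeasurableEquiv.measurableEmbedding _)]
  calc ∫ p : ℝ × ℝ, Real.exp (-c * ‖Complex.measurableEquivRealProd.symm p‖ ^ 2)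
      = ∫ p : ℝ × ℝ, Real.exp (-c * p.1 ^ 2) * Real.exp (-c * p.2 ^ 2) := by
        simp_rw [key_fun]
    _ = (∫ x : ℝ, Real.exp (-c * x ^ 2)) * ∫ y : ℝ, Real.exp (-c * y ^ 2) := by
        rw [Measure.volume_eq_prod]
        exact integral_prod_mul (fun x : ℝ => Real.exp (-c * x ^ 2))
          (fun y : ℝ => Real.exp (-c * y ^ 2))
    _ = π / c := by
        rw [integral_gaussian, Real.mul_self_sqrt (by positivity)]

private noncomputable def conjL : ℂ →L[ℝ] ℂ := Complex.conjCLE.toContinuousLinearMap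

private noncomputable def Dmap {n : ℕ} (lam : Fin n → ℝ) (I : Finset (Fin n)) (a : Fin n → ℂ) :
    (Fin n → ℂ) →L[ℝ] ℂ :=
  ∑ j ∈ I, (lam j : ℂ) •
    ((a j) • (conjL.comp (ContinuousLinearMap.proj j)) +
      ((starRingEnd ℂ) (a j)) • (ContinuousLinearMap.proj (R := ℝ) (φ := fun _ : Fin n => ℂ) j))

private lemma hasFDerivAt_F {n : ℕ} (lam : Fin n → ℝ) (I : Finset (Fin n)) (a : Fin n → ℂ) :
    HasFDerivAt (fun z : Fin n → ℂ => ∑ j ∈ I, (lam j : ℂ) * (z j * (starRingEnd ℂ) (z j)))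
      (Dmap lam I a) a := by
  refine HasFDerivAt.fun_sum fun j _ => ?_
  have h1 : HasFDerivAt (fun z : Fin n → ℂ => z j)
      (ContinuousLinearMap.proj (R := ℝ) (φ := fun _ : Fin n => ℂ) j) a :=
    (ContinuousLinearMap.proj (R := ℝ) (φ := fun _ : Fin n => ℂ) j).hasFDerivAt
  have h2 : HasFDerivAt (fun z : Fin n → ℂ => (starRingEnd ℂ) (z j))
      (conjL.comp (ContinuousLinearMap.proj j)) a := conjL.hasFDerivAt.comp a h1
  exact (h1.mul h2).const_mul _

private lemma Dmap_single {n : ℕ} (lam : Fin n → ℝ) (I : Finset (Fin n)) (a : Fin n → ℂ)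
    (k : Fin n) (v : ℂ) :
    Dmap lam I a (Pi.single k v) =
      if k ∈ I then (lam k : ℂ) * (a k * (starRingEnd ℂ) v + (starRingEnd ℂ) (a k) * v)
      else 0 := by
  rw [Dmap, ContinuousLinearMap.sum_apply]
  rw [Finset.sum_congr rfl (fun j _ => ?_), Finset.sum_ite_eq' I k
    (fun j => (lam j : ℂ) * (a j * (starRingEnd ℂ) v + (starRingEnd ℂ) (a j) * v))]
  simp [conjL, Pi.single_apply, smul_eq_mul]
  by_cases h : j = k <;> simp [h, mul_add]

private lemma hgF {n : ℕ} (lam : Fin n → ℝ) (I : Finset (Fin n)) (z : Fin n → ℂ) :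
    ((∑ j ∈ I, lam j * ‖z j‖ ^ 2 : ℝ) : ℂ)
      = ∑ j ∈ I, (lam j : ℂ) * (z j * (starRingEnd ℂ) (z j)) := by
  push_cast
  refine Finset.sum_congr rfl fun j _ => ?_
  rw [Complex.mul_conj, Complex.normSq_eq_norm_sq]
  push_cast
  ring

private lemma hasFDerivAt_g {n : ℕ} (lam : Fin n → ℝ) (I : Finset (Fin n))
    (g : (Fin n → ℂ) → ℂ)
    (hg : g = fun z => Complex.exp ((∑ j ∈ I, lam j * ‖z j‖ ^ 2 : ℝ) : ℂ)) (a : Fin n → ℂ) :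
    HasFDerivAt g
      ((((1 : ℂ →L[ℂ] ℂ).smulRight (g a)).restrictScalars ℝ).comp (Dmap lam I a)) a := by
  have hF := hasFDerivAt_F lam I a
  have hexp : HasFDerivAt Complex.exp
      (((1 : ℂ →L[ℂ] ℂ).smulRight (g a)).restrictScalars ℝ)
      (∑ j ∈ I, (lam j : ℂ) * (a j * (starRingEnd ℂ) (a j))) := by
    have := (Complex.hasDerivAt_exp
      (∑ j ∈ I, (lam j : ℂ) * (a j * (starRingEnd ℂ) (a j)))).hasFDerivAt
    have hga : g a = Complex.exp (∑ j ∈ I, (lam j : ℂ) * (a j * (starRingEnd ℂ) (a j))) := by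
      rw [hg]; exact congrArg Complex.exp (hgF lam I a)
    rw [hga]
    exact this.restrictScalars ℝ
  have := hexp.comp a hF
  refine this.congr_of_eventuallyEq (Filter.Eventually.of_forall fun z => ?_)
  rw [hg]
  exact congrArg Complex.exp (hgF lam I z)

private lemma fderiv_g_single {n : ℕ} (lam : Fin n → ℝ) (I : Finset (Fin n))
    (g : (Fin n → ℂ) → ℂ)
    (hg : g = fun z => Complex.exp ((∑ j ∈ I, lam j * ‖z j‖ ^ 2 : ℝ) : ℂ)) (a : Fin n → ℂ)
    (k : Fin n) (v : ℂ) :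
    fderiv ℝ g a (Pi.single k v) =
      g a * (if k ∈ I then (lam k : ℂ) * (a k * (starRingEnd ℂ) v + (starRingEnd ℂ) (a k) * v)
        else 0) := by
  rw [(hasFDerivAt_g lam I g hg a).fderiv]
  simp [Dmap_single, mul_comm]

end Aux

/-- The explicit model extremal function: with all `λ_j ≠ 0` and
`I = {j : λ_j < 0}`, the function `g(z) = exp(∑_{j∈I} λ_j |z_j|²)` is smooth,
satisfies the model harmonicity equations, has `g(0) = 1`, and
`‖g‖²_{φ₀} = π^n / ∏ j |λ_j|`. -/
theorem model_extremal_attained (n : ℕ) (lam : Fin n → ℝ) (hlam : ∀ j, lam j ≠ 0)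
    (I : Finset (Fin n)) (hI : I = Finset.univ.filter fun j => lam j < 0)
    (g : (Fin n → ℂ) → ℂ)
    (hg : g = fun z => Complex.exp ((∑ j ∈ I, lam j * ‖z j‖ ^ 2 : ℝ) : ℂ)) :
    ContDiff ℝ (⊤ : ℕ∞) g ∧ ModelHarmonic lam I g ∧ g 0 = 1 ∧
      l2normSq lam g = ENNReal.ofReal Real.pi ^ n / ∏ j : Fin n, ENNReal.ofReal |lam j| := by
  have habs : ∀ j, 0 < |lam j| := fun j => abs_pos.mpr (hlam j)
  refine ⟨?_, ⟨?_, ?_⟩, ?_, ?_⟩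
  · -- smoothness
    have hgF' : g = fun z : Fin n → ℂ =>
        Complex.exp (∑ j ∈ I, (lam j : ℂ) * (z j * (starRingEnd ℂ) (z j))) := by
      rw [hg]; funext z; exact congrArg Complex.exp (hgF lam I z)
    rw [hgF']
    refine ((Complex.contDiff_exp (𝕜 := ℂ)).restrict_scalars ℝ).comp ?_
    refine ContDiff.sum fun j _ => ?_
    refine contDiff_const.mul ?_
    exact ((ContinuousLinearMap.proj (R := ℝ) (φ := fun _ : Fin n => ℂ) j).contDiff).mul
      (conjL.contDiff.comp
        (ContinuousLinearMap.proj (R := ℝ) (φ := fun _ : Fin n => ℂ) j).contDiff)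
  · -- adjOp = 0 for j ∈ I
    intro k hk z
    have h1 := fderiv_g_single lam I g hg z k 1
    have h2 := fderiv_g_single lam I g hg z k Complex.I
    rw [adjOp, wderiv, h1, h2]
    simp only [if_pos hk, map_one, mul_one, Complex.conj_I]
    ring_nf
    simp only [Complex.I_sq]
    ring
  · -- wderivBar = 0 for j ∉ I
    intro k hk z
    have h1 := fderiv_g_single lam I g hg z k 1
    have h2 := fderiv_g_single lam I g hg z k Complex.I
    rw [wderivBar, h1, h2]
    simp [if_neg hk]
  · -- g 0 = 1
    rw [hg]; simp
  · -- the integral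
    have hintegrand : ∀ z : Fin n → ℂ,
        (‖g z‖₊ : ℝ≥0∞) ^ 2 * ENNReal.ofReal (Real.exp (-(phi0 lam z)))
          = ENNReal.ofReal (∏ j : Fin n, Real.exp (-|lam j| * ‖z j‖ ^ 2)) := by
      intro z
      have hnorm : ‖g z‖ = Real.exp (∑ j ∈ I, lam j * ‖z j‖ ^ 2) := by
        rw [hg]
        simp only [Complex.norm_exp, Complex.ofReal_re]
      rw [← enorm_eq_nnnorm, ← ofReal_norm_eq_enorm, hnorm, ← ENNReal.ofReal_pow (by positivity),
        ← ENNReal.ofReal_mul (by positivity), ← Real.exp_nat_mul, ← Real.exp_add,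
        ← Real.exp_sum]
      congr 1
      have hsum : (2 : ℝ) * (∑ j ∈ I, lam j * ‖z j‖ ^ 2) - phi0 lam z
          = ∑ j : Fin n, -|lam j| * ‖z j‖ ^ 2 := by
        rw [phi0, hI, Finset.sum_filter, Finset.mul_sum, ← Finset.sum_sub_distrib]
        refine Finset.sum_congr rfl fun j _ => ?_
        rcases lt_or_gt_of_ne (hlam j) with h | h
        · rw [if_pos h, abs_of_neg h]; ring
        · rw [if_neg (not_lt.mpr h.le), abs_of_pos h]; ring
      rw [← hsum]
      ring_nf
    rw [l2normSq]
    simp_rw [hintegrand]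
    have hint : MeasureTheory.Integrable
        (fun z : Fin n → ℂ => ∏ j : Fin n, Real.exp (-|lam j| * ‖z j‖ ^ 2)) :=
      MeasureTheory.Integrable.fintype_prod
        (f := fun j (w : ℂ) => Real.exp (-|lam j| * ‖w‖ ^ 2))
        fun j => integrable_gauss_plane (habs j)
    have hnn : (0 : (Fin n → ℂ) → ℝ) ≤ᵐ[MeasureTheory.volume]
        fun z : Fin n → ℂ => ∏ j : Fin n, Real.exp (-|lam j| * ‖z j‖ ^ 2) :=
      Filter.Eventually.of_forall fun z =>
        Finset.prod_nonneg fun j _ => (Real.exp_pos _).le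
    rw [← MeasureTheory.ofReal_integral_eq_lintegral_ofReal hint hnn]
    rw [MeasureTheory.volume_pi, MeasureTheory.integral_fintype_prod_eq_prod
      (f := fun j (w : ℂ) => Real.exp (-|lam j| * ‖w‖ ^ 2))]
    rw [Finset.prod_congr rfl fun j _ => integral_gauss_plane (habs j)]
    rw [ENNReal.ofReal_prod_of_nonneg
      (fun j _ => by positivity)]
    have hne : (∏ j : Fin n, ENNReal.ofReal |lam j|) ≠ 0 := by
      rw [Finset.prod_ne_zero_iff]
      exact fun j _ => (ENNReal.ofReal_pos.mpr (habs j)).ne'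
    have hnetop : (∏ j : Fin n, ENNReal.ofReal |lam j|) ≠ ⊤ :=
      ENNReal.prod_ne_top fun j _ => ENNReal.ofReal_ne_top
    rw [ENNReal.eq_div_iff hne hnetop, ← Finset.prod_mul_distrib]
    have : ∀ j : Fin n, ENNReal.ofReal |lam j| * ENNReal.ofReal (Real.pi / |lam j|)
        = ENNReal.ofReal Real.pi := by
      intro j
      rw [← ENNReal.ofReal_mul (abs_nonneg _), mul_div_cancel₀ _ (habs j).ne']
    rw [Finset.prod_congr rfl fun j _ => this j, Finset.prod_const, Finset.card_univ,
      Fintype.card_fin]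
end
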